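/- arXiv:math/0111030 — 7 statements merged into one kernel-verified Lean document; each statement's English description precedes it below -/
import Mathlib

section
/- Let A be a finite abelian p-group admitting an automorphism φ of order p^n with exactly p^m fixed points. Then for every a in p^m·A, one has a + aφ + aφ² + ⋯ + aφ^(p^n − 1) = 0. -/
/-- If a finite abelian `p`-group `A` admits an automorphism `φ` of order
`p ^ n` with exactly `p ^ m` fixed points, then for every element of `p ^ m • A` (i.e. every
element of the form `p ^ m • a`), the sum of its images under `φ^0, φ^1, …, φ^(p^n - 1)`
vanishes. -/
theorem stmt0 (p n m : ℕ) (hp : p.Prime) (A : Type*) [AddCommGroup A] [Finite A]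
    (hcard : ∃ e : ℕ, Nat.card A = p ^ e)
    (φ : AddAut A) (hord : addOrderOf φ = p ^ n)
    (hfix : Nat.card {a : A // φ a = a} = p ^ m) :
    ∀ a : A, ∑ i ∈ Finset.range (p ^ n), (i • φ) (p ^ m • a) = 0 := by
  intro a
  set N := p ^ n with hN
  set s : A := ∑ i ∈ Finset.range N, (i • φ) a with hs
  -- s is fixed by φ
  have hφN : N • φ = 0 := by rw [← hord]; exact addOrderOf_nsmul_eq_zero φ
  have hfixs : φ s = s := by
    have h1 : φ s = ∑ i ∈ Finset.range N, ((i + 1) • φ) a := by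
      rw [hs, map_sum]
      refine Finset.sum_congr rfl fun i _ => ?_
      rw [succ_nsmul']
      rfl
    have h2 : ∑ i ∈ Finset.range (N + 1), (i • φ) a
        = (∑ i ∈ Finset.range N, ((i + 1) • φ) a) + (0 • φ) a :=
      Finset.sum_range_succ' _ N
    have h3 : ∑ i ∈ Finset.range (N + 1), (i • φ) a
        = (∑ i ∈ Finset.range N, (i • φ) a) + (N • φ) a :=
      Finset.sum_range_succ _ N
    have h4 : (N • φ) a = (0 • φ) a := by rw [hφN, zero_nsmul]
    have : (∑ i ∈ Finset.range N, ((i + 1) • φ) a) + (0 • φ) a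
        = (∑ i ∈ Finset.range N, (i • φ) a) + (0 • φ) a := by
      rw [← h2, h3, h4]
    have h5 := add_right_cancel this
    rw [h1, h5, hs]
  -- the fixed point set as a subgroup
  let F : AddSubgroup A :=
    { carrier := {x | φ x = x}
      zero_mem' := map_zero φ
      add_mem' := fun hx hy => by simp_all [map_add]
      neg_mem' := fun hx => by simp_all [map_neg] }
  have hsF : s ∈ F := hfixs
  have hcardF : Nat.card F = p ^ m := hfix
  have hps : p ^ m • s = 0 := by
    have h : Nat.card F • (⟨s, hsF⟩ : F) = 0 := card_nsmul_eq_zero'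
    rw [hcardF] at h
    have := congrArg Subtype.val h
    simpa using this
  calc ∑ i ∈ Finset.range N, (i • φ) (p ^ m • a)
      = ∑ i ∈ Finset.range N, p ^ m • (i • φ) a := by
        refine Finset.sum_congr rfl fun i _ => ?_
        exact map_nsmul (i • φ : AddAut A).toAddMonoidHom _ _
    _ = p ^ m • s := by rw [hs, Finset.smul_sum]
    _ = 0 := hps
end

section
/- Let A be a finite abelian p-group with an automorphism φ satisfying a + aφ + ⋯ + aφ^(p^n−1) = 0 for all a ∈ A. Then for every φ-invariant section U of A (a quotient of a φ-invariant subgroup by a φ-invariant subgroup), the fixed points of the induced automorphism satisfy p^n · C_U(φ) = 0. -/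
/-- If an automorphism `φ` of a finite abelian `p`-group `A` satisfies
`a + aφ + ⋯ + aφ^(p^n - 1) = 0` on `A`, then for every `φ`-invariant section `U = C / D`
of `A`, the fixed points of the induced automorphism satisfy `p ^ n • C_U(φ) = 0`:
i.e. whenever `c ∈ C` represents a fixed coset (`φ c - c ∈ D`), we have `p ^ n • c ∈ D`. -/
theorem stmt1 (p n : ℕ) (hp : p.Prime) (A : Type*) [AddCommGroup A] [Finite A]
    (hcard : ∃ e : ℕ, Nat.card A = p ^ e)
    (φ : AddAut A)
    (hcyc : ∀ a : A, ∑ i ∈ Finset.range (p ^ n), (i • φ) a = 0)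
    (C D : AddSubgroup A) (hDC : D ≤ C)
    (hC : ∀ x ∈ C, φ x ∈ C) (hD : ∀ x ∈ D, φ x ∈ D) :
    ∀ c ∈ C, φ c - c ∈ D → p ^ n • c ∈ D := by
  intro c hc hfix
  set d := φ c - c with hd
  have hdD : ∀ j : ℕ, (j • φ) d ∈ D := by
    intro j
    induction j with
    | zero => simpa using hfix
    | succ j ih =>
      have : ((j + 1) • φ) d = φ ((j • φ) d) := by
        rw [succ_nsmul']; rfl
      rw [this]
      exact hD _ ih
  have key : ∀ i : ℕ, (i • φ) c = c + ∑ j ∈ Finset.range i, (j • φ) d := by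
    intro i
    induction i with
    | zero => simp
    | succ i ih =>
      have h1 : ((i + 1) • φ) c = (i • φ) (φ c) := by
        rw [succ_nsmul]; rfl
      have h2 : φ c = c + d := by rw [hd]; abel
      rw [h1, h2, map_add, ih, Finset.sum_range_succ]
      abel
  have hsum := hcyc c
  have hsum2 : ∑ i ∈ Finset.range (p ^ n), (i • φ) c
      = p ^ n • c + ∑ i ∈ Finset.range (p ^ n), ∑ j ∈ Finset.range i, (j • φ) d := by
    rw [Finset.sum_congr rfl fun i _ => key i, Finset.sum_add_distrib,
      Finset.sum_const, Finset.card_range]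
  have hS : ∑ i ∈ Finset.range (p ^ n), ∑ j ∈ Finset.range i, (j • φ) d ∈ D :=
    AddSubgroup.sum_mem _ (fun i _ => AddSubgroup.sum_mem _ fun j _ => hdD j)
  have : p ^ n • c = -(∑ i ∈ Finset.range (p ^ n), ∑ j ∈ Finset.range i, (j • φ) d) := by
    rw [hsum2] at hsum
    linear_combination (norm := abel) hsum
  rw [this]
  exact neg_mem hS
end

section
/- Let A be a finite abelian p-group with an automorphism φ satisfying a + aφ + ⋯ + aφ^(p^n−1) = 0 on A. If V is a homocyclic φ-invariant section of A of exponent p^s, then |C_V(φ)| = |C_{p^i V / p^{i+n} V}(φ)| whenever 0 ≤ i ≤ s − n. -/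
set_option linter.unusedVariables false
set_option maxHeartbeats 1000000

/-- The image `k • C` of an additive subgroup under multiplication by `k`. -/
def smulImg {A : Type*} [AddCommGroup A] (k : ℕ) (C : AddSubgroup A) : AddSubgroup A :=
  AddSubgroup.map (k • AddMonoidHom.id A) C

/-- The number of fixed points, in the section `C / D` of `A`, of the automorphism
induced by `φ` (a coset is fixed iff some — equivalently any — representative `c`
satisfies `φ c - c ∈ D`). -/
noncomputable def sectionFixedCard {A : Type*} [AddCommGroup A] (φ : AddAut A)
    (C D : AddSubgroup A) : ℕ :=
  Nat.card {x : C ⧸ D.addSubgroupOf C //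
    ∃ c : C, QuotientAddGroup.mk c = x ∧ φ (c : A) - (c : A) ∈ D}

lemma aux_card_eq {G H : Type*} [AddGroup G] [AddGroup H] [Finite G] (f : G →+ H) :
    Nat.card G = Nat.card f.range * Nat.card f.ker := by
  rw [AddSubgroup.card_eq_card_quotient_mul_card_addSubgroup f.ker,
    Nat.card_congr (QuotientAddGroup.quotientKerEquivRange f).toEquiv]

lemma aux_cardA {V : Type*} [AddCommGroup V] [Finite V] (T : V →+ V) (E F : AddSubgroup V)
    (h : ∀ f ∈ F, ∃ e ∈ E, T e = f) :
    Nat.card ↥(E ⊓ F.comap T) = Nat.card ↥(E ⊓ T.ker) * Nat.card ↥F := by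
  set S := E ⊓ F.comap T with hS
  have hmem : ∀ x : ↥S, T x.1 ∈ F := fun x => x.2.2
  let g : ↥S →+ ↥F := AddMonoidHom.codRestrict (T.comp S.subtype) F hmem
  have hrange : g.range = ⊤ := by
    rw [AddMonoidHom.range_eq_top]
    rintro ⟨f, hf⟩
    obtain ⟨e, he, hef⟩ := h f hf
    exact ⟨⟨e, he, by simpa [AddSubgroup.mem_comap, hef]⟩, Subtype.ext hef⟩
  have hker : Nat.card g.ker = Nat.card ↥(E ⊓ T.ker) := by
    apply Nat.card_congr
    refine ⟨fun x => ⟨x.1.1, x.1.2.1, ?_⟩, fun y => ⟨⟨y.1, y.2.1, ?_⟩, ?_⟩, fun x => rfl, fun y => rfl⟩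
    · have := x.2
      exact congrArg Subtype.val (AddMonoidHom.mem_ker.mp this)
    · have : T y.1 = 0 := y.2.2
      simp [AddSubgroup.mem_comap, this, zero_mem]
    · have : T y.1 = 0 := y.2.2
      exact AddMonoidHom.mem_ker.mpr (Subtype.ext this)
  have := aux_card_eq g
  rw [hrange, hker] at this
  rw [this, Nat.card_congr (AddSubgroup.topEquiv.toEquiv)]
  ring

lemma aux_zmod (p s i n : ℕ) (hp : p.Prime) (hin : i + n ≤ s) (x : ZMod (p ^ s))
    (hx : p ^ i • x = 0) : ∃ y, x = p ^ n • y := by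
  haveI : NeZero (p ^ s) := ⟨pow_ne_zero _ hp.ne_zero⟩
  have hx' : ((p ^ i * x.val : ℕ) : ZMod (p ^ s)) = 0 := by
    push_cast
    rw [ZMod.natCast_rightInverse x]
    simpa [nsmul_eq_mul] using hx
  rw [ZMod.natCast_eq_zero_iff] at hx'
  have hi : i ≤ s := le_trans (Nat.le_add_right _ _) hin
  have hdvd : p ^ (s - i) ∣ x.val := by
    have h1 : p ^ i * p ^ (s - i) ∣ p ^ i * x.val := by
      rwa [← pow_add, Nat.add_sub_cancel' hi]
    exact (mul_dvd_mul_iff_left (pow_ne_zero i hp.ne_zero)).mp h1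
  obtain ⟨m, hm⟩ := hdvd
  refine ⟨((p ^ (s - i - n) * m : ℕ) : ZMod (p ^ s)), ?_⟩
  have : x = ((x.val : ℕ) : ZMod (p ^ s)) := (ZMod.natCast_rightInverse x).symm
  rw [this, hm, nsmul_eq_mul]
  push_cast
  ring_nf
  rw [← pow_add]
  congr 2
  omega

section
variable {A : Type*} [AddCommGroup A] (φ : AddAut A) (C D : AddSubgroup A)

noncomputable def auxPi : C →+ C ⧸ D.addSubgroupOf C := QuotientAddGroup.mk' _

def auxPhiC (hC : ∀ x ∈ C, φ x ∈ C) : C →+ C :=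
  AddMonoidHom.mk' (fun c => ⟨φ c, hC c c.2⟩) (fun a b => by ext; simp)

noncomputable def auxPsi (hC : ∀ x ∈ C, φ x ∈ C) (hD : ∀ x ∈ D, φ x ∈ D) :
    AddMonoid.End (C ⧸ D.addSubgroupOf C) :=
  QuotientAddGroup.map _ _ (auxPhiC φ C hC) (by
    intro c hc
    rw [AddSubgroup.mem_comap, AddSubgroup.mem_addSubgroupOf] at *
    exact hD _ hc)

noncomputable def auxT (hC : ∀ x ∈ C, φ x ∈ C) (hD : ∀ x ∈ D, φ x ∈ D) :
    AddMonoid.End (C ⧸ D.addSubgroupOf C) :=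
  auxPsi φ C D hC hD - 1

lemma auxPsi_pi (hC : ∀ x ∈ C, φ x ∈ C) (hD : ∀ x ∈ D, φ x ∈ D) (c : C) :
    auxPsi φ C D hC hD (auxPi C D c) = auxPi C D (auxPhiC φ C hC c) := by
  simp [auxPsi, auxPi, QuotientAddGroup.map_mk']
  rfl

lemma auxT_pi (hC : ∀ x ∈ C, φ x ∈ C) (hD : ∀ x ∈ D, φ x ∈ D) (c : C) :
    auxT φ C D hC hD (auxPi C D c) = auxPi C D (auxPhiC φ C hC c - c) := by
  show auxPsi φ C D hC hD (auxPi C D c) - auxPi C D c = _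
  rw [auxPsi_pi, map_sub]

lemma auxPi_eq_zero_iff (c : C) : auxPi C D c = 0 ↔ (c : A) ∈ D := by
  rw [auxPi]
  show ((c : C ⧸ D.addSubgroupOf C) = 0) ↔ _
  rw [QuotientAddGroup.eq_zero_iff, AddSubgroup.mem_addSubgroupOf]

lemma aux_bridge [Finite A] (hDC : D ≤ C)
    (hC : ∀ x ∈ C, φ x ∈ C) (hD : ∀ x ∈ D, φ x ∈ D)
    (C' D' : AddSubgroup A)
    (hC'C : C' ≤ C) (hDD' : D ≤ D') (hD'C' : D' ≤ C')
    (hC' : ∀ x ∈ C', φ x ∈ C') (hD' : ∀ x ∈ D', φ x ∈ D') :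
    sectionFixedCard φ C' D' * Nat.card ↥D' =
      Nat.card ↥(AddSubgroup.map (auxPi C D) (C'.addSubgroupOf C) ⊓
        (AddSubgroup.map (auxPi C D) (D'.addSubgroupOf C)).comap (auxT φ C D hC hD))
        * Nat.card ↥D := by
  classical
  set π := auxPi C D with hπ
  set T := auxT φ C D hC hD with hT
  set E := AddSubgroup.map π (C'.addSubgroupOf C) with hE
  set F := AddSubgroup.map π (D'.addSubgroupOf C) with hF
  let S : AddSubgroup A :=
    { carrier := {c | c ∈ C' ∧ φ c - c ∈ D'}
      zero_mem' := ⟨C'.zero_mem, by rw [map_zero, sub_zero]; exact D'.zero_mem⟩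
      add_mem' := by
        rintro a b ⟨ha1, ha2⟩ ⟨hb1, hb2⟩
        refine ⟨C'.add_mem ha1 hb1, ?_⟩
        rw [map_add]
        convert D'.add_mem ha2 hb2 using 1
        abel
      neg_mem' := by
        rintro a ⟨h1, h2⟩
        refine ⟨C'.neg_mem h1, ?_⟩
        rw [map_neg]
        convert D'.neg_mem h2 using 1
        abel }
  have hSmem : ∀ s : ↥S, (s : A) ∈ C' ∧ φ (s : A) - (s : A) ∈ D' := fun s => s.2
  have hDS : ∀ d ∈ D, d ∈ S := fun d hd =>
    ⟨hD'C' (hDD' hd), sub_mem (hDD' (hD d hd)) (hDD' hd)⟩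
  -- g1
  let g1 : ↥S →+ C' ⧸ D'.addSubgroupOf C' :=
    (QuotientAddGroup.mk' (D'.addSubgroupOf C')).comp
      (AddMonoidHom.mk' (fun s => (⟨s.1, (hSmem s).1⟩ : ↥C')) (fun a b => rfl))
  have hg1range : Nat.card ↥g1.range = sectionFixedCard φ C' D' := by
    rw [sectionFixedCard]
    apply Nat.card_congr
    apply Equiv.subtypeEquivRight
    intro x
    constructor
    · rintro ⟨s, rfl⟩
      exact ⟨⟨s.1, (hSmem s).1⟩, rfl, (hSmem s).2⟩
    · rintro ⟨c, hcx, hc⟩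
      exact ⟨⟨c.1, c.2, hc⟩, hcx⟩
  have hg1ker : Nat.card ↥g1.ker = Nat.card ↥D' := by
    apply Nat.card_congr
    have hker_iff : ∀ s : ↥S, s ∈ g1.ker ↔ (s : A) ∈ D' := by
      intro s
      rw [AddMonoidHom.mem_ker]
      show ((⟨s.1, (hSmem s).1⟩ : ↥C') : C' ⧸ D'.addSubgroupOf C') = 0 ↔ _
      rw [QuotientAddGroup.eq_zero_iff, AddSubgroup.mem_addSubgroupOf]
    exact
      { toFun := fun x => ⟨x.1.1, (hker_iff x.1).mp x.2⟩
        invFun := fun d => ⟨⟨d.1, hD'C' d.2, sub_mem (hD' d.1 d.2) d.2⟩, (hker_iff _).mpr d.2⟩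
        left_inv := fun x => Subtype.ext (Subtype.ext rfl)
        right_inv := fun d => rfl }
  -- g2
  let ρ : ↥S →+ C ⧸ D.addSubgroupOf C :=
    π.comp (AddMonoidHom.mk' (fun s => (⟨s.1, hC'C (hSmem s).1⟩ : ↥C)) (fun a b => rfl))
  have hρrange : ρ.range = E ⊓ F.comap T := by
    ext v
    constructor
    · rintro ⟨s, rfl⟩
      constructor
      · exact ⟨⟨s.1, hC'C (hSmem s).1⟩, AddSubgroup.mem_addSubgroupOf.mpr (hSmem s).1, rfl⟩
      · show T (π _) ∈ F
        rw [auxT_pi]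
        exact ⟨_, AddSubgroup.mem_addSubgroupOf.mpr (hSmem s).2, rfl⟩
    · rintro ⟨⟨c₀, hc₀, rfl⟩, hvF⟩
      have hvF' : T (π c₀) ∈ F := hvF
      rw [auxT_pi] at hvF'
      obtain ⟨d, hd, hπd⟩ := hvF'
      have hsub : ((d - (auxPhiC φ C hC c₀ - c₀) : ↥C) : A) ∈ D := by
        rw [← auxPi_eq_zero_iff C D, map_sub, hπd, sub_self]
      have hd' : (d : A) ∈ D' := AddSubgroup.mem_addSubgroupOf.mp hd
      have hfix : φ (c₀ : A) - (c₀ : A) ∈ D' := by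
        have : (d : A) - (φ (c₀ : A) - (c₀ : A)) ∈ D' := hDD' hsub
        have := sub_mem hd' this
        simpa using this
      refine ⟨⟨c₀.1, AddSubgroup.mem_addSubgroupOf.mp hc₀, hfix⟩, rfl⟩
  have hρker : Nat.card ↥ρ.ker = Nat.card ↥D := by
    apply Nat.card_congr
    have hker_iff : ∀ s : ↥S, s ∈ ρ.ker ↔ (s : A) ∈ D := by
      intro s
      rw [AddMonoidHom.mem_ker]
      show π _ = 0 ↔ _
      rw [auxPi_eq_zero_iff]
      exact Iff.rfl
    exact
      { toFun := fun x => ⟨x.1.1, (hker_iff x.1).mp x.2⟩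
        invFun := fun d => ⟨⟨d.1, hDS d.1 d.2⟩, (hker_iff _).mpr d.2⟩
        left_inv := fun x => Subtype.ext (Subtype.ext rfl)
        right_inv := fun d => rfl }
  have e1 := aux_card_eq g1
  have e2 := aux_card_eq ρ
  rw [hg1range, hg1ker] at e1
  rw [hρrange, hρker] at e2
  rw [← e1, e2]

end

/-- If `φ` satisfies `a + aφ + ⋯ + aφ^(p^n-1) = 0` on the finite abelian
`p`-group `A` and `V = C / D` is a homocyclic `φ`-invariant section of exponent `p ^ s`,
then `|C_V(φ)| = |C_{p^i V / p^{i+n} V}(φ)|` whenever `0 ≤ i ≤ s - n`.  Here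
`p^i V = (p^i C + D)/D`, so `p^i V / p^{i+n} V` is the section `(p^i C + D)/(p^{i+n} C + D)`
of `A`. -/
theorem stmt2 (p n s i : ℕ) (hp : p.Prime) (A : Type*) [AddCommGroup A] [Finite A]
    (hcard : ∃ e : ℕ, Nat.card A = p ^ e)
    (φ : AddAut A)
    (hcyc : ∀ a : A, ∑ j ∈ Finset.range (p ^ n), (j • φ) a = 0)
    (C D : AddSubgroup A) (hDC : D ≤ C)
    (hC : ∀ x ∈ C, φ x ∈ C) (hD : ∀ x ∈ D, φ x ∈ D)
    (hhomo : ∃ (ι : Type) (_ : Fintype ι),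
      Nonempty ((C ⧸ D.addSubgroupOf C) ≃+ (ι → ZMod (p ^ s))))
    (hin : i + n ≤ s) :
    sectionFixedCard φ C D =
      sectionFixedCard φ (smulImg (p ^ i) C ⊔ D) (smulImg (p ^ (i + n)) C ⊔ D) := by
  classical
  obtain ⟨ι, _inst, ⟨eqv⟩⟩ := hhomo
  set π := auxPi C D with hπdef
  set ψ := auxPsi φ C D hC hD with hψdef
  set T := auxT φ C D hC hD with hTdef
  -- powers of φ stay in C
  have hmemC : ∀ (j : ℕ) (c : C), ((j • φ) (c : A)) ∈ C := by
    intro j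
    induction j with
    | zero => intro c; simpa using c.2
    | succ j ih =>
      intro c
      rw [succ_nsmul']
      exact hC _ (ih c)
  have hψpow : ∀ (j : ℕ) (c : C), (ψ ^ j) (π c) = π ⟨(j • φ) (c : A), hmemC j c⟩ := by
    intro j
    induction j with
    | zero =>
      intro c
      simp only [pow_zero]
      show π c = _
      exact congrArg π (Subtype.ext (by simp))
    | succ j ih =>
      intro c
      rw [pow_succ']
      show ψ ((ψ ^ j) (π c)) = _
      rw [ih c, hψdef, auxPsi_pi]
      refine congrArg (auxPi C D) (Subtype.ext ?_)
      show φ ((j • φ) (c : A)) = ((j + 1) • φ) (c : A)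
      rw [succ_nsmul']
      rfl
  have hnorm : ∀ v : C ⧸ D.addSubgroupOf C, ∑ j ∈ Finset.range (p ^ n), (ψ ^ j) v = 0 := by
    intro v
    obtain ⟨c, rfl⟩ := QuotientAddGroup.mk'_surjective (D.addSubgroupOf C) v
    have step : ∀ j ∈ Finset.range (p ^ n),
        (ψ ^ j) (π c) = π ⟨(j • φ) (c : A), hmemC j c⟩ := fun j _ => hψpow j c
    calc ∑ j ∈ Finset.range (p ^ n), (ψ ^ j) (π c)
        = ∑ j ∈ Finset.range (p ^ n), π ⟨(j • φ) (c : A), hmemC j c⟩ :=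
          Finset.sum_congr rfl step
      _ = π (∑ j ∈ Finset.range (p ^ n), ⟨(j • φ) (c : A), hmemC j c⟩) :=
          (map_sum π _ _).symm
      _ = 0 := by
          have hz : (∑ j ∈ Finset.range (p ^ n), (⟨(j • φ) (c : A), hmemC j c⟩ : C)) = 0 := by
            apply Subtype.ext
            push_cast
            simpa using hcyc (c : A)
          rw [hz, map_zero]
  -- the "norm trick" endomorphism
  set P : AddMonoid.End (C ⧸ D.addSubgroupOf C) :=
    -∑ j ∈ Finset.range (p ^ n), ∑ k ∈ Finset.range j, ψ ^ k with hPdef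
  have hTapp : ∀ v, T v = ψ v - v := fun v => rfl
  have htele : ∀ (j : ℕ) (v : C ⧸ D.addSubgroupOf C),
      T ((∑ k ∈ Finset.range j, ψ ^ k) v) = (ψ ^ j) v - v := by
    intro j v
    have h1 : (∑ k ∈ Finset.range j, ψ ^ k) v = ∑ k ∈ Finset.range j, (ψ ^ k) v :=
      AddMonoidHom.finset_sum_apply _ _ _
    rw [hTapp, h1, map_sum, ← Finset.sum_sub_distrib]
    have h2 : ∀ k ∈ Finset.range j, ψ ((ψ ^ k) v) - (ψ ^ k) v
        = (ψ ^ (k + 1)) v - (ψ ^ k) v := by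
      intro k _
      rw [pow_succ']
      rfl
    rw [Finset.sum_congr rfl h2, Finset.sum_range_sub (fun k => (ψ ^ k) v)]
    simp
  have hP : ∀ v, T (P v) = (p ^ n) • v := by
    intro v
    have hPv : P v = -∑ j ∈ Finset.range (p ^ n), (∑ k ∈ Finset.range j, ψ ^ k) v := by
      rw [hPdef]
      exact (AddMonoidHom.neg_apply _ _).trans (congrArg Neg.neg (AddMonoidHom.finset_sum_apply _ _ _))
    rw [hPv, map_neg, map_sum, Finset.sum_congr rfl (fun j _ => htele j v),
      Finset.sum_sub_distrib, hnorm v, Finset.sum_const, Finset.card_range]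
    simp
  -- divisibility from homocyclicity
  have hdiv : ∀ v : C ⧸ D.addSubgroupOf C, (p ^ i) • v = 0 → ∃ w, v = (p ^ n) • w := by
    intro v hv
    have hx : ∀ t : ι, (p ^ i) • (eqv v) t = 0 := by
      intro t
      have h0 : eqv ((p ^ i) • v) = 0 := by rw [hv, map_zero]
      rw [map_nsmul] at h0
      have := congrFun h0 t
      simpa using this
    choose y hy using fun t => aux_zmod p s i n hp hin ((eqv v) t) (hx t)
    refine ⟨eqv.symm (fun t => y t), ?_⟩
    apply eqv.injective
    rw [map_nsmul, AddEquiv.apply_symm_apply]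
    funext t
    simpa using hy t
  -- the two subgroups
  set C' := smulImg (p ^ i) C ⊔ D with hC'def
  set D' := smulImg (p ^ (i + n)) C ⊔ D with hD'def
  have hsmul_app : ∀ (k : ℕ) (a : A), ((k • AddMonoidHom.id A) a) = k • a := by
    intro k a; rw [AddMonoidHom.smul_apply]; rfl
  have hmem_smulImg : ∀ (k : ℕ) (a : A), a ∈ C → k • a ∈ smulImg k C := by
    intro k a ha
    exact ⟨a, ha, hsmul_app k a⟩
  have hsmul_le : ∀ k : ℕ, smulImg k C ≤ C := by
    rintro k x ⟨c, hc, rfl⟩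
    rw [hsmul_app]
    exact nsmul_mem hc k
  have hC'C : C' ≤ C := sup_le (hsmul_le _) hDC
  have hsmul_mono : smulImg (p ^ (i + n)) C ≤ smulImg (p ^ i) C := by
    rintro x ⟨c, hc, rfl⟩
    rw [hsmul_app, pow_add, mul_smul]
    exact hmem_smulImg _ _ (nsmul_mem hc _)
  have hD'C' : D' ≤ C' := sup_le (hsmul_mono.trans le_sup_left) le_sup_right
  have hDD' : D ≤ D' := le_sup_right
  have hinv : ∀ k : ℕ, ∀ x ∈ smulImg k C ⊔ D, φ x ∈ smulImg k C ⊔ D := by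
    intro k x hx
    rw [AddSubgroup.mem_sup] at hx
    obtain ⟨y, hy, z, hz, rfl⟩ := hx
    rw [map_add]
    obtain ⟨c, hc, rfl⟩ := hy
    rw [hsmul_app, map_nsmul]
    exact add_mem (AddSubgroup.mem_sup_left (hmem_smulImg _ _ (hC c hc)))
      (AddSubgroup.mem_sup_right (hD z hz))
  have hC'inv : ∀ x ∈ C', φ x ∈ C' := hinv (p ^ i)
  have hD'inv : ∀ x ∈ D', φ x ∈ D' := hinv (p ^ (i + n))
  -- key divisibility / membership facts about E and F
  have key1 : ∀ (k : ℕ) (v : C ⧸ D.addSubgroupOf C),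
      k • v ∈ AddSubgroup.map π ((smulImg k C ⊔ D).addSubgroupOf C) := by
    intro k v
    obtain ⟨c, rfl⟩ := QuotientAddGroup.mk'_surjective (D.addSubgroupOf C) v
    have hv : (QuotientAddGroup.mk' (D.addSubgroupOf C)) c = π c := rfl
    rw [hv, ← map_nsmul]
    refine AddSubgroup.mem_map.mpr ⟨k • c, ?_, rfl⟩
    have : ((k • c : C) : A) ∈ smulImg k C ⊔ D :=
      AddSubgroup.mem_sup_left (hmem_smulImg _ _ c.2)
    exact AddSubgroup.mem_addSubgroupOf.mpr this
  have key2 : ∀ (k : ℕ), ∀ v ∈ AddSubgroup.map π ((smulImg k C ⊔ D).addSubgroupOf C),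
      ∃ w, v = k • w := by
    intro k v hvmem
    obtain ⟨c₀, hc₀, rfl⟩ := AddSubgroup.mem_map.mp hvmem
    have hc₀' : (c₀ : A) ∈ smulImg k C ⊔ D := AddSubgroup.mem_addSubgroupOf.mp hc₀
    rw [AddSubgroup.mem_sup] at hc₀'
    obtain ⟨y, hy, z, hz, hyz⟩ := hc₀'
    obtain ⟨c₁, hc₁, rfl⟩ := hy
    refine ⟨π ⟨c₁, hc₁⟩, ?_⟩
    have hsub : ((c₀ - k • ⟨c₁, hc₁⟩ : C) : A) ∈ D := by
      push_cast
      rw [hsmul_app] at hyz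
      have : (c₀ : A) - k • c₁ = z := by rw [← hyz]; abel
      rw [this]
      exact hz
    have h0 : π (c₀ - k • ⟨c₁, hc₁⟩) = 0 := (auxPi_eq_zero_iff C D _).mpr hsub
    rw [map_sub, map_nsmul, sub_eq_zero] at h0
    exact h0
  set E := AddSubgroup.map π (C'.addSubgroupOf C) with hEdef
  set F := AddSubgroup.map π (D'.addSubgroupOf C) with hFdef
  -- counting
  have hFsurjT : ∀ f ∈ F, ∃ e ∈ E, T e = f := by
    intro f hf
    obtain ⟨w, rfl⟩ := key2 _ f hf
    refine ⟨P ((p ^ i) • w), ?_, ?_⟩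
    · rw [map_nsmul]
      exact key1 (p ^ i) (P w)
    · rw [hP, ← mul_smul, ← pow_add, add_comm n i]
  have card1 : Nat.card ↥(E ⊓ F.comap (T : _ →+ _)) =
      Nat.card ↥(E ⊓ (T : _ →+ _).ker) * Nat.card ↥F := aux_cardA T E F hFsurjT
  set μ : (C ⧸ D.addSubgroupOf C) →+ (C ⧸ D.addSubgroupOf C) :=
    AddMonoidHom.mk' (fun v => (p ^ i) • v) (fun a b => smul_add (p ^ i) a b) with hμdef
  have card2 := aux_cardA μ ⊤ (E ⊓ (T : _ →+ _).ker) (by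
    rintro f ⟨hfE, _⟩
    obtain ⟨w, rfl⟩ := key2 _ f hfE
    exact ⟨w, trivial, rfl⟩)
  have card3 := aux_cardA T ⊤ μ.ker (by
    intro f hf
    have hf0 : (p ^ i) • f = 0 := hf
    obtain ⟨w, rfl⟩ := hdiv f hf0
    exact ⟨P w, trivial, hP w⟩)
  have hsets : (⊤ : AddSubgroup _) ⊓ AddSubgroup.comap μ (E ⊓ (T : _ →+ _).ker)
      = ⊤ ⊓ AddSubgroup.comap (T : _ →+ _) μ.ker := by
    ext v
    simp only [AddSubgroup.mem_inf, AddSubgroup.mem_comap, AddMonoidHom.mem_ker,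
      AddSubgroup.mem_top, true_and]
    have hμv : μ v = (p ^ i) • v := rfl
    have hμT : μ (T v) = (p ^ i) • (T v) := rfl
    constructor
    · rintro ⟨-, h2⟩
      have h2 : T (μ v) = 0 := h2
      show μ (T v) = 0
      rw [hμT, ← map_nsmul T, ← hμv]
      exact h2
    · intro h
      refine ⟨key1 _ _, ?_⟩
      have h : μ (T v) = 0 := h
      show T (μ v) = 0
      rw [hμv, map_nsmul, ← hμT]
      exact h
  rw [hsets] at card2
  rw [card3] at card2
  have hposμ : 0 < Nat.card ↥μ.ker := @Nat.card_pos _ ⟨⟨0, μ.ker.zero_mem⟩⟩ _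
  have hEker : Nat.card ↥(E ⊓ (T : _ →+ _).ker) = Nat.card ↥(T : _ →+ _).ker := by
    have h1 : Nat.card ↥((⊤ : AddSubgroup _) ⊓ μ.ker) = Nat.card ↥μ.ker := by
      rw [top_inf_eq]
    have h2 : Nat.card ↥((⊤ : AddSubgroup _) ⊓ (T : _ →+ _).ker)
        = Nat.card ↥(T : _ →+ _).ker := by rw [top_inf_eq]
    rw [h1, h2] at card2
    -- card2 : |kerT| * |μ.ker| = |μ.ker| * |E ⊓ kerT|
    apply Nat.eq_of_mul_eq_mul_left hposμ
    rw [← card2]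
    ring
  -- bridges
  have hposD : 0 < Nat.card ↥D := @Nat.card_pos _ ⟨⟨0, D.zero_mem⟩⟩ _
  have hposF : 0 < Nat.card ↥F := @Nat.card_pos _ ⟨⟨0, F.zero_mem⟩⟩ _
  have b1 := aux_bridge φ C D hDC hC hD C D le_rfl le_rfl hDC hC hD
  have hEF0 : (AddSubgroup.map π (C.addSubgroupOf C) ⊓
      (AddSubgroup.map π (D.addSubgroupOf C)).comap (T : _ →+ _)) = (T : _ →+ _).ker := by
    ext v
    constructor
    · rintro ⟨-, hvF⟩
      obtain ⟨d, hd, hdv⟩ := hvF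
      show T v = 0
      refine hdv.symm.trans ?_
      exact (auxPi_eq_zero_iff C D d).mpr (AddSubgroup.mem_addSubgroupOf.mp hd)
    · intro hv
      constructor
      · obtain ⟨c, rfl⟩ := QuotientAddGroup.mk'_surjective (D.addSubgroupOf C) v
        exact ⟨c, AddSubgroup.mem_addSubgroupOf.mpr c.2, rfl⟩
      · show T v ∈ AddSubgroup.map π (D.addSubgroupOf C)
        have hv : T v = 0 := hv
        rw [hv]
        exact zero_mem _
  rw [hEF0] at b1
  have ha : sectionFixedCard φ C D = Nat.card ↥(T : _ →+ _).ker :=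
    Nat.eq_of_mul_eq_mul_right hposD b1
  have b2 := aux_bridge φ C D hDC hC hD C' D' hC'C hDD' hD'C' hC'inv hD'inv
  -- |D'| = |F| * |D|
  have hD'card : Nat.card ↥D' = Nat.card ↥F * Nat.card ↥D := by
    set h3 : ↥(D'.addSubgroupOf C) →+ (C ⧸ D.addSubgroupOf C) :=
      π.comp (D'.addSubgroupOf C).subtype with h3def
    have hr : h3.range = F := by
      rw [h3def, AddMonoidHom.range_comp, AddSubgroup.range_subtype]
    have hker_iff : ∀ x : ↥(D'.addSubgroupOf C), x ∈ h3.ker ↔ ((x : C) : A) ∈ D := by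
      intro x
      rw [AddMonoidHom.mem_ker]
      show π _ = 0 ↔ _
      rw [auxPi_eq_zero_iff]
      exact Iff.rfl
    have hk : Nat.card ↥h3.ker = Nat.card ↥D := by
      apply Nat.card_congr
      exact
        { toFun := fun x => ⟨x.1.1.1, (hker_iff x.1).mp x.2⟩
          invFun := fun d => ⟨⟨⟨d.1, hDC d.2⟩,
            AddSubgroup.mem_addSubgroupOf.mpr (hDD' d.2)⟩, (hker_iff _).mpr d.2⟩
          left_inv := fun x => Subtype.ext (Subtype.ext (Subtype.ext rfl))
          right_inv := fun d => rfl }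
    have hcardD' : Nat.card ↥(D'.addSubgroupOf C) = Nat.card ↥D' :=
      Nat.card_congr (AddSubgroup.addSubgroupOfEquivOfLe (hD'C'.trans hC'C)).toEquiv
    have := aux_card_eq h3
    rw [hr, hk, hcardD'] at this
    exact this
  rw [hD'card, card1, hEker] at b2
  -- b2 : sfc C' D' * (|F| * |D|) = (|kerT| * |F|) * |D|
  rw [ha]
  apply Nat.eq_of_mul_eq_mul_right hposF
  apply Nat.eq_of_mul_eq_mul_right hposD
  calc Nat.card ↥(T : _ →+ _).ker * Nat.card ↥F * Nat.card ↥D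
      = Nat.card ↥(T : _ →+ _).ker * Nat.card ↥F * Nat.card ↥D := rfl
    _ = sectionFixedCard φ C' D' * Nat.card ↥F * Nat.card ↥D := by
        rw [← mul_assoc] at b2
        rw [← b2]
end

section
/- Let A be a finite abelian p-group and φ an automorphism of A of order exactly p^n such that φ_{n'}(φ) = 0 on A, where φ_{n'}(x) denotes the cyclotomic polynomial of order p^{n'} (i.e., the p^{n'}-th cyclotomic polynomial evaluated at φ acts as zero on A). Then either n' = n, or n' > n; and if n' > n, then pA = 0. -/
/-- Let `φ` be an automorphism of the finite abelian `p`-group `A`, of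
order exactly `p ^ n`, annihilated by the `p^{n'}`-th cyclotomic polynomial, i.e.
`a + aφ^{p^{n'-1}} + aφ^{2p^{n'-1}} + ⋯ + aφ^{(p-1)p^{n'-1}} = 0` for all `a`.  Then
either `n' = n` or `n' > n`, and in the latter case `p • A = 0`. -/
theorem stmt3 (p n n' : ℕ) (hp : p.Prime) (hn' : 1 ≤ n')
    (A : Type*) [AddCommGroup A] [Finite A]
    (hcard : ∃ e : ℕ, Nat.card A = p ^ e)
    (φ : AddAut A) (hord : addOrderOf φ = p ^ n)
    (hcyc : ∀ a : A, ∑ j ∈ Finset.range p, ((j * p ^ (n' - 1)) • φ) a = 0) :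
    n ≤ n' ∧ (n < n' → ∀ a : A, p • a = 0) := by
  set c := p ^ (n' - 1) with hc
  have hpc : p * c = p ^ n' := by
    rw [hc, ← pow_succ']
    congr 1
    omega
  have hkey : (p * c) • φ = 0 := by
    ext a
    have h1 := hcyc a
    have h2 : ∑ j ∈ Finset.range p, (((j + 1) * c) • φ) a = 0 := by
      have := congrArg (fun x => (c • φ) x) h1
      simp only [map_sum, map_zero] at this
      rw [← this]
      refine Finset.sum_congr rfl fun j _ => ?_
      rw [← AddAut.add_apply, ← add_nsmul]
      ring_nf
    have e1 : ∑ j ∈ Finset.range (p + 1), ((j * c) • φ) a = a := by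
      rw [Finset.sum_range_succ', h2]
      simp
    have e2 : ∑ j ∈ Finset.range (p + 1), ((j * c) • φ) a = ((p * c) • φ) a := by
      rw [Finset.sum_range_succ, h1, zero_add]
    have : ((p * c) • φ) a = a := by rw [← e2, e1]
    simpa using this
  have hdvd : p ^ n ∣ p ^ n' := by
    rw [← hord, ← hpc]
    exact addOrderOf_dvd_of_nsmul_eq_zero hkey
  have hle : n ≤ n' := (Nat.pow_dvd_pow_iff_le_right hp.one_lt).mp hdvd
  refine ⟨hle, fun hlt a => ?_⟩
  have hφc : c • φ = 0 := by
    apply addOrderOf_dvd_iff_nsmul_eq_zero.mp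
    rw [hord, hc]
    exact pow_dvd_pow p (by omega)
  have := hcyc a
  have hconst : ∀ j ∈ Finset.range p, ((j * c) • φ) a = a := by
    intro j _
    rw [mul_comm, mul_nsmul, hφc, nsmul_zero]
    rfl
  rw [Finset.sum_congr rfl hconst, Finset.sum_const, Finset.card_range] at this
  exact this
end

section
/- Let A be a finite abelian p-group admitting an automorphism φ of order p^n with exactly p^m fixed points, and let ψ = φ^{p^{n−1}}. If ψ has order p (i.e., ψ ≠ 1), then the p-th cyclotomic polynomial evaluated at ψ annihilates p^k·A, where p^k = |C_A(ψ)|. Consequently ψ satisfies a + aψ + aψ² + ⋯ + aψ^{p−1} = 0 for all a ∈ p^k A. -/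
/-- Let `A` be a finite abelian `p`-group with an automorphism `φ` of order
`p ^ n` with exactly `p ^ m` fixed points, and let `ψ = φ^{p^{n-1}}`.  If `ψ ≠ 1` (so `ψ`
has order `p`) and `|C_A(ψ)| = p ^ k`, then the `p`-th cyclotomic polynomial evaluated at
`ψ` annihilates `p ^ k • A`: for every `a ∈ A`,
`p^k a + (p^k a)ψ + ⋯ + (p^k a)ψ^{p-1} = 0`. -/
theorem stmt5 (p n m k : ℕ) (hp : p.Prime)
    (A : Type*) [AddCommGroup A] [Finite A]
    (hcard : ∃ e : ℕ, Nat.card A = p ^ e)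
    (φ : AddAut A) (hord : addOrderOf φ = p ^ n)
    (hfix : Nat.card {a : A // φ a = a} = p ^ m)
    (hψ : (p ^ (n - 1)) • φ ≠ 0)
    (hfixk : Nat.card {a : A // ((p ^ (n - 1)) • φ) a = a} = p ^ k) :
    ∀ a : A, ∑ i ∈ Finset.range p, (i • ((p ^ (n - 1)) • φ)) (p ^ k • a) = 0 := by
  intro a
  set ψ : AddAut A := (p ^ (n - 1)) • φ with hψdef
  have hn : n ≠ 0 := by
    rintro rfl
    apply hψ
    simp only [Nat.zero_sub, pow_zero, pow_one, one_smul, hψdef]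
    have : addOrderOf φ = 1 := by simpa using hord
    exact AddMonoid.addOrderOf_eq_one_iff.mp this
  have hψp : p • ψ = 0 := by
    rw [hψdef, smul_smul, ← pow_succ', Nat.sub_add_cancel (Nat.one_le_iff_ne_zero.mpr hn),
      ← hord, addOrderOf_nsmul_eq_zero]
  -- the fixed-point subgroup of ψ
  let C : AddSubgroup A :=
    { carrier := {x : A | ψ x = x}
      add_mem' := fun {x y} hx hy => by
        simp only [Set.mem_setOf_eq] at *
        rw [map_add, hx, hy]
      zero_mem' := by simp
      neg_mem' := fun {x} hx => by
        simp only [Set.mem_setOf_eq] at *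
        rw [map_neg, hx] }
  have hCcard : Nat.card C = p ^ k := hfixk
  -- the norm element lies in C
  have hmem : (∑ i ∈ Finset.range p, (i • ψ) a) ∈ C := by
    show ψ (∑ i ∈ Finset.range p, (i • ψ) a) = ∑ i ∈ Finset.range p, (i • ψ) a
    rw [map_sum]
    have h1 : ∀ i, ψ ((i • ψ) a) = ((i + 1) • ψ) a := by
      intro i
      rw [succ_nsmul']
      rfl
    simp only [h1]
    obtain ⟨q, hq⟩ : ∃ q, p = q + 1 := ⟨p - 1, (Nat.succ_pred_eq_of_pos hp.pos).symm⟩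
    rw [hq, Finset.sum_range_succ, Finset.sum_range_succ']
    congr 1
    rw [← hq, hψp, zero_smul]
  -- any element of C is killed by p ^ k
  have hkill : p ^ k • (∑ i ∈ Finset.range p, (i • ψ) a) = 0 := by
    have := card_nsmul_eq_zero' (G := C) (x := ⟨_, hmem⟩)
    rw [hCcard] at this
    have h2 := congrArg (Subtype.val) this
    simpa using h2
  calc ∑ i ∈ Finset.range p, (i • ψ) (p ^ k • a)
      = ∑ i ∈ Finset.range p, p ^ k • ((i • ψ) a) := by
        refine Finset.sum_congr rfl fun i _ => ?_
        exact map_nsmul (i • ψ : AddAut A).toAddMonoidHom _ _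
    _ = p ^ k • (∑ i ∈ Finset.range p, (i • ψ) a) := (Finset.smul_sum).symm
    _ = 0 := hkill
end

section
/- Let L be a finite Lie ring of derived length at most 2 admitting an automorphism φ of order p. Then γ_{p+1}(pL) is contained in the ideal of L generated by the fixed-point subring C_L(φ). -/
open TensorProduct Polynomial

set_option linter.unusedSectionVars false
set_option linter.unusedVariables false
set_option maxHeartbeats 1000000

/-- The additive subgroup generated by brackets `⁅c, d⁆`, `c ∈ C`, `d ∈ D`. -/
def lieBr {L : Type*} [LieRing L] (C D : AddSubgroup L) : AddSubgroup L :=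
  AddSubgroup.closure {x : L | ∃ c ∈ C, ∃ d ∈ D, x = ⁅c, d⁆}

/-- Iterated bracket `[C, D, D, …, D]` (`g` copies of `D`). -/
def iterBr {L : Type*} [LieRing L] (C D : AddSubgroup L) : ℕ → AddSubgroup L
  | 0 => C
  | g + 1 => lieBr (iterBr C D g) D

/-- Derived series of an additive subgroup of a Lie ring. -/
def derSub {L : Type*} [LieRing L] (C : AddSubgroup L) : ℕ → AddSubgroup L
  | 0 => C
  | g + 1 => lieBr (derSub C g) (derSub C g)

/-- An additive subgroup which is a (two-sided) Lie ideal. -/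
def IsLieIdeal {L : Type*} [LieRing L] (I : AddSubgroup L) : Prop :=
  ∀ x ∈ I, ∀ y : L, ⁅x, y⁆ ∈ I ∧ ⁅y, x⁆ ∈ I

/-- The ideal of the Lie ring `L` generated by a set `S`. -/
def idealGen {L : Type*} [LieRing L] (S : Set L) : AddSubgroup L :=
  sInf {I : AddSubgroup L | S ⊆ ↑I ∧ IsLieIdeal I}

/-- A fully-invariant additive subgroup: preserved by every Lie-ring endomorphism. -/
def FullyInvariant {L : Type*} [LieRing L] (I : AddSubgroup L) : Prop :=
  ∀ f : L →+ L, (∀ x y : L, f ⁅x, y⁆ = ⁅f x, f y⁆) → ∀ x ∈ I, f x ∈ I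


lemma subset_idealGen {L : Type*} [LieRing L] (S : Set L) : S ⊆ ↑(idealGen S) := by
  intro x hx
  rw [idealGen, SetLike.mem_coe, AddSubgroup.mem_sInf]
  exact fun J hJ => hJ.1 hx

lemma idealGen_isLieIdeal {L : Type*} [LieRing L] (S : Set L) : IsLieIdeal (idealGen S) := by
  intro x hx y
  rw [idealGen, AddSubgroup.mem_sInf] at hx
  constructor <;>
  · rw [idealGen, AddSubgroup.mem_sInf]
    intro J hJ
    first
      | exact (hJ.2 x (hx J hJ) y).1
      | exact (hJ.2 x (hx J hJ) y).2


/-- sublist sums set -/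
def ssums {p : ℕ} : List (ZMod p) → Finset (ZMod p)
  | [] => {0}
  | x :: l => ssums l ∪ (ssums l).image (x + ·)

lemma mem_ssums {p : ℕ} (l : List (ZMod p)) (t : ZMod p) (ht : t ∈ ssums l) :
    ∃ s, List.Sublist s l ∧ s.sum = t := by
  induction l generalizing t with
  | nil =>
    simp only [ssums, Finset.mem_singleton] at ht
    exact ⟨[], List.Sublist.refl _, by simp [ht]⟩
  | cons x l ih =>
    simp only [ssums, Finset.mem_union, Finset.mem_image] at ht
    rcases ht with h | ⟨u, hu, rfl⟩
    · obtain ⟨s, hs, rfl⟩ := ih _ h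
      exact ⟨s, hs.trans (List.sublist_cons_self x l), rfl⟩
    · obtain ⟨s, hs, rfl⟩ := ih _ hu
      exact ⟨x :: s, hs.cons₂ x, by simp⟩

lemma zero_mem_ssums {p : ℕ} (l : List (ZMod p)) : (0 : ZMod p) ∈ ssums l := by
  induction l with
  | nil => simp [ssums]
  | cons x l ih => exact Finset.mem_union_left _ ih

lemma ssums_card {p : ℕ} [Fact p.Prime] (l : List (ZMod p)) (h0 : ∀ x ∈ l, x ≠ 0) :
    l.length + 1 ≤ (ssums l).card ∨ ssums l = Finset.univ := by
  haveI : NeZero p := ⟨(Fact.out : p.Prime).ne_zero⟩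
  induction l with
  | nil => left; simp [ssums]
  | cons x l ih =>
    have hx : x ≠ 0 := h0 x List.mem_cons_self
    rcases ih (fun y hy => h0 y (List.mem_cons_of_mem x hy)) with hcard | huniv
    · by_cases hsub : (ssums l).image (x + ·) ⊆ ssums l
      · -- closed under adding x; then ssums l = univ
        have heq : (ssums l).image (x + ·) = ssums l :=
          Finset.eq_of_subset_of_card_le hsub
            (by rw [Finset.card_image_of_injective _ (add_right_injective x)])
        have hmul : ∀ n : ℕ, (n : ZMod p) * x ∈ ssums l := by
          intro n
          induction n with
          | zero => simpa using zero_mem_ssums l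
          | succ n ihn =>
            have : x + (n : ZMod p) * x ∈ (ssums l).image (x + ·) :=
              Finset.mem_image_of_mem _ ihn
            rw [heq] at this
            convert this using 1
            push_cast
            ring
        have huniv : ssums l = Finset.univ := by
          apply Finset.eq_univ_of_forall
          intro t
          have := hmul (t * x⁻¹).val
          rwa [ZMod.natCast_val, ZMod.cast_id, mul_assoc, inv_mul_cancel₀ hx, mul_one] at this
        right
        simp only [ssums, huniv]
        rw [Finset.eq_univ_iff_forall]
        intro t; exact Finset.mem_union_left _ (Finset.mem_univ t)
      · obtain ⟨y, hy, hyn⟩ := Finset.not_subset.mp hsub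
        left
        have hins : insert y (ssums l) ⊆ ssums (x :: l) := by
          intro z hz
          rcases Finset.mem_insert.mp hz with rfl | hz
          · exact Finset.mem_union_right _ hy
          · exact Finset.mem_union_left _ hz
        calc (x :: l).length + 1 = (l.length + 1) + 1 := by simp
          _ ≤ (ssums l).card + 1 := by omega
          _ = (insert y (ssums l)).card := (Finset.card_insert_of_notMem hyn).symm
          _ ≤ _ := Finset.card_le_card hins
    · right
      simp only [ssums, huniv]
      rw [Finset.eq_univ_iff_forall]
      intro t; exact Finset.mem_union_left _ (Finset.mem_univ t)

/-- Key combinatorial fact: sublist sums of `p-1` nonzero elements of `ZMod p` cover everything. -/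
lemma exists_sublist_sum {p : ℕ} [Fact p.Prime] (l : List (ZMod p)) (h0 : ∀ x ∈ l, x ≠ 0)
    (hlen : p ≤ l.length + 1) (t : ZMod p) : ∃ s, List.Sublist s l ∧ s.sum = t := by
  apply mem_ssums
  have huniv : ssums l = Finset.univ := by
    rcases ssums_card l h0 with hcard | huniv
    · apply Finset.eq_univ_of_card
      have h1 : (ssums l).card ≤ Fintype.card (ZMod p) := Finset.card_le_univ _
      have h2 : Fintype.card (ZMod p) = p := ZMod.card p
      omega
    · exact huniv
  rw [huniv]; exact Finset.mem_univ t

abbrev Rp (p : ℕ) := AdjoinRoot (cyclotomic p ℤ)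

section
variable (p : ℕ) [hpf : Fact p.Prime] {L : Type*} [LieRing L]

noncomputable def pB : PowerBasis ℤ (Rp p) := AdjoinRoot.powerBasis' (cyclotomic.monic p ℤ)

lemma pB_dim_pos : 0 < (pB p).dim := by
  have h1 : (pB p).dim = (cyclotomic p ℤ).natDegree := AdjoinRoot.powerBasis'_dim _
  rw [h1, natDegree_cyclotomic]
  exact Nat.totient_pos.mpr hpf.out.pos

noncomputable def coordT (i : Fin (pB p).dim) : Rp p ⊗[ℤ] L →ₗ[ℤ] L :=
  TensorProduct.lift ((LinearMap.lsmul ℤ L).comp ((pB p).basis.coord i))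

lemma coordT_tmul (i : Fin (pB p).dim) (r : Rp p) (x : L) :
    coordT p i (r ⊗ₜ[ℤ] x) = ((pB p).basis.repr r i) • x := by
  exact TensorProduct.lift.tmul _ _

lemma recon (z : Rp p ⊗[ℤ] L) :
    ∑ i, ((pB p).basis i) ⊗ₜ[ℤ] (coordT p i z) = z := by
  induction z using TensorProduct.induction_on with
  | zero => simp
  | tmul r x =>
    calc ∑ i, ((pB p).basis i) ⊗ₜ[ℤ] (coordT p i (r ⊗ₜ[ℤ] x))
        = ∑ i, (((pB p).basis.repr r i) • (pB p).basis i) ⊗ₜ[ℤ] x := by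
          refine Finset.sum_congr rfl (fun i _ => ?_)
          rw [coordT_tmul, TensorProduct.tmul_smul, TensorProduct.smul_tmul']
      _ = (∑ i, ((pB p).basis.repr r i) • (pB p).basis i) ⊗ₜ[ℤ] x := by
          rw [TensorProduct.sum_tmul]
      _ = r ⊗ₜ[ℤ] x := by rw [Module.Basis.sum_repr]
  | add z₁ z₂ h₁ h₂ =>
    have key : ∀ i : Fin (pB p).dim, ((pB p).basis i) ⊗ₜ[ℤ] (coordT p i (z₁ + z₂)) =
        ((pB p).basis i) ⊗ₜ[ℤ] (coordT p i z₁) + ((pB p).basis i) ⊗ₜ[ℤ] (coordT p i z₂) :=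
      fun i => by rw [map_add, TensorProduct.tmul_add]
    rw [Finset.sum_congr rfl (fun i _ => key i), Finset.sum_add_distrib, h₁, h₂]
end

section
variable (p : ℕ) [hpf : Fact p.Prime] {L : Type*} [LieRing L]

lemma tsum_lie {α : Type*} (s : Finset α) (f : α → Rp p ⊗[ℤ] L) (w : Rp p ⊗[ℤ] L) :
    ⁅∑ i ∈ s, f i, w⁆ = ∑ i ∈ s, ⁅f i, w⁆ := by
  classical
  induction s using Finset.cons_induction with
  | empty => rw [Finset.sum_empty, Finset.sum_empty]; exact zero_lie w
  | cons a s ha ih => rw [Finset.sum_cons, Finset.sum_cons, ← ih]; exact add_lie _ _ _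

lemma tlie_sum {α : Type*} (s : Finset α) (f : α → Rp p ⊗[ℤ] L) (w : Rp p ⊗[ℤ] L) :
    ⁅w, ∑ i ∈ s, f i⁆ = ∑ i ∈ s, ⁅w, f i⁆ := by
  classical
  induction s using Finset.cons_induction with
  | empty => rw [Finset.sum_empty, Finset.sum_empty]; exact lie_zero w
  | cons a s ha ih => rw [Finset.sum_cons, Finset.sum_cons, ← ih]; exact lie_add w (f a) (∑ i ∈ s, f i)

variable (φ : AddAut L)

noncomputable def Itil : AddSubgroup (Rp p ⊗[ℤ] L) where
  carrier := {z | ∀ i, coordT p i z ∈ idealGen {x : L | φ x = x}}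
  add_mem' := fun ha hb i => by rw [map_add]; exact add_mem (ha i) (hb i)
  zero_mem' := fun i => by rw [map_zero]; exact zero_mem _
  neg_mem' := fun ha i => by rw [map_neg]; exact neg_mem (ha i)

lemma mem_Itil {z : Rp p ⊗[ℤ] L} :
    z ∈ Itil p φ ↔ ∀ i, coordT p i z ∈ idealGen {x : L | φ x = x} := Iff.rfl

lemma tmul_bracket' (r s : Rp p) (x y : L) :
    ⁅r ⊗ₜ[ℤ] x, s ⊗ₜ[ℤ] y⁆ = (r * s) ⊗ₜ[ℤ] ⁅x, y⁆ :=
  LieAlgebra.ExtendScalars.bracket_tmul ℤ (Rp p) L L r s x y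

lemma Itil_lie_right {z : Rp p ⊗[ℤ] L} (hz : z ∈ Itil p φ) (w : Rp p ⊗[ℤ] L) :
    ⁅z, w⁆ ∈ Itil p φ := by
  rw [mem_Itil]
  intro k
  have hzw : ⁅z, w⁆ = ∑ i, ∑ j,
      ((pB p).basis i * (pB p).basis j) ⊗ₜ[ℤ] ⁅coordT p i z, coordT p j w⁆ := by
    conv_lhs => rw [← recon p z, ← recon p w]
    rw [tsum_lie]
    refine Finset.sum_congr rfl (fun i _ => ?_)
    rw [tlie_sum]
    refine Finset.sum_congr rfl (fun j _ => ?_)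
    exact tmul_bracket' p _ _ _ _
  rw [hzw, map_sum]
  refine AddSubgroup.sum_mem _ (fun i _ => ?_)
  rw [map_sum]
  refine AddSubgroup.sum_mem _ (fun j _ => ?_)
  rw [coordT_tmul]
  exact AddSubgroup.zsmul_mem _ ((idealGen_isLieIdeal _ _ (hz i) _).1) _

lemma Itil_lie_left {z : Rp p ⊗[ℤ] L} (hz : z ∈ Itil p φ) (w : Rp p ⊗[ℤ] L) :
    ⁅w, z⁆ ∈ Itil p φ := by
  have h : -⁅w, z⁆ = ⁅z, w⁆ := lie_skew z w
  have h2 : ⁅w, z⁆ = -⁅z, w⁆ := by rw [← h]; exact (neg_neg _).symm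
  rw [h2]
  exact neg_mem (Itil_lie_right p φ hz w)
end

section
variable (p : ℕ) [hpf : Fact p.Prime]

noncomputable abbrev omg : Rp p := AdjoinRoot.root _

lemma omg_pow_p : (omg p) ^ p = 1 := by
  have h : (aeval (omg p)) ((X : ℤ[X]) ^ p - 1) = 0 := by
    rw [omg, AdjoinRoot.aeval_eq, AdjoinRoot.mk_eq_zero]
    exact cyclotomic.dvd_X_pow_sub_one p ℤ
  simpa [sub_eq_zero] using h

lemma omg_sum : ∑ i ∈ Finset.range p, (omg p) ^ i = 0 := by
  have h : (aeval (omg p)) (∑ i ∈ Finset.range p, (X : ℤ[X]) ^ i) = 0 := by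
    rw [omg, AdjoinRoot.aeval_eq, AdjoinRoot.mk_eq_zero, ← cyclotomic_prime ℤ p]
  simpa using h

noncomputable def Om (k : ZMod p) : Rp p := (omg p) ^ k.val

lemma omg_pow_mod (n : ℕ) : (omg p) ^ (n % p) = (omg p) ^ n := by
  conv_rhs => rw [← Nat.div_add_mod n p]
  rw [pow_add, pow_mul, omg_pow_p, one_pow, one_mul]

lemma Om_add (a b : ZMod p) : Om p (a + b) = Om p a * Om p b := by
  haveI : NeZero p := ⟨hpf.out.ne_zero⟩
  rw [Om, Om, Om, ZMod.val_add, omg_pow_mod, pow_add]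

lemma Om_zero : Om p 0 = 1 := by
  haveI : NeZero p := ⟨hpf.out.ne_zero⟩
  simp [Om]

lemma Om_sum_univ : ∑ k : ZMod p, Om p k = 0 := by
  haveI : NeZero p := ⟨hpf.out.ne_zero⟩
  rw [← omg_sum p]
  rw [Finset.sum_bij' (fun (k : ZMod p) _ => k.val) (fun i _ => (i : ZMod p))]
  · intro k _; exact Finset.mem_range.mpr k.val_lt
  · intro i hi; exact Finset.mem_univ _
  · intro k _; exact ZMod.natCast_zmod_val k  -- might be ZMod.natCast_val + cast_id
  · intro i hi; exact ZMod.val_cast_of_lt (Finset.mem_range.mp hi)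
  · intro k _; rfl

lemma Om_sum_mul {j : ZMod p} (hj : j ≠ 0) : ∑ k : ZMod p, Om p (k * j) = 0 := by
  rw [← Om_sum_univ p]
  exact Fintype.sum_equiv (Equiv.mulRight₀ j hj) _ _ (fun k => rfl)
end

section
variable (p : ℕ) [hpf : Fact p.Prime] {L : Type*} [LieRing L]

-- local bracket API on the tensor ring, restated in term mode to fix instances
lemma tlie_zero (z : Rp p ⊗[ℤ] L) : ⁅z, (0 : Rp p ⊗[ℤ] L)⁆ = 0 := lie_zero z
lemma tzero_lie (z : Rp p ⊗[ℤ] L) : ⁅(0 : Rp p ⊗[ℤ] L), z⁆ = 0 := zero_lie z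
lemma tlie_add (z w₁ w₂ : Rp p ⊗[ℤ] L) : ⁅z, w₁ + w₂⁆ = ⁅z, w₁⁆ + ⁅z, w₂⁆ := lie_add z w₁ w₂
lemma tadd_lie (z₁ z₂ w : Rp p ⊗[ℤ] L) : ⁅z₁ + z₂, w⁆ = ⁅z₁, w⁆ + ⁅z₂, w⁆ := add_lie z₁ z₂ w
lemma tlie_neg (z w : Rp p ⊗[ℤ] L) : ⁅z, -w⁆ = -⁅z, w⁆ := lie_neg z w
lemma tneg_lie (z w : Rp p ⊗[ℤ] L) : ⁅-z, w⁆ = -⁅z, w⁆ := neg_lie z w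
lemma tsmul_lie (r : Rp p) (z w : Rp p ⊗[ℤ] L) : ⁅r • z, w⁆ = r • ⁅z, w⁆ := smul_lie r z w
lemma tlie_smul (r : Rp p) (z w : Rp p ⊗[ℤ] L) : ⁅z, r • w⁆ = r • ⁅z, w⁆ := lie_smul r z w
lemma tlie_skew (z w : Rp p ⊗[ℤ] L) : ⁅z, w⁆ = -⁅w, z⁆ := (lie_skew z w).symm
lemma tleibniz (x y z : Rp p ⊗[ℤ] L) : ⁅x, ⁅y, z⁆⁆ = ⁅⁅x, y⁆, z⁆ + ⁅y, ⁅x, z⁆⁆ :=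
  leibniz_lie x y z

noncomputable def Phi (φ : AddAut L) : Rp p ⊗[ℤ] L →ₗ[Rp p] Rp p ⊗[ℤ] L :=
  LinearMap.baseChange (Rp p) φ.toAddMonoidHom.toIntLinearMap

variable (φ : AddAut L)

lemma Phi_tmul (r : Rp p) (x : L) : Phi p φ (r ⊗ₜ[ℤ] x) = r ⊗ₜ[ℤ] (φ x) := by
  simp [Phi]

lemma Phi_lie (hlie : ∀ x y : L, φ ⁅x, y⁆ = ⁅φ x, φ y⁆) (z w : Rp p ⊗[ℤ] L) :
    Phi p φ ⁅z, w⁆ = ⁅Phi p φ z, Phi p φ w⁆ := by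
  induction z using TensorProduct.induction_on with
  | zero => rw [tzero_lie, map_zero, tzero_lie]
  | tmul r x =>
    induction w using TensorProduct.induction_on with
    | zero => rw [tlie_zero, map_zero, tlie_zero]
    | tmul s y => rw [tmul_bracket' p, Phi_tmul, Phi_tmul, Phi_tmul, tmul_bracket' p, hlie]
    | add w₁ w₂ h₁ h₂ => rw [tlie_add, map_add, h₁, h₂, map_add, tlie_add]
  | add z₁ z₂ h₁ h₂ => rw [tadd_lie, map_add, h₁, h₂, map_add, tadd_lie]

lemma h2t (h2 : ∀ a b c d : L, ⁅⁅a, b⁆, ⁅c, d⁆⁆ = 0) (a b c d : Rp p ⊗[ℤ] L) :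
    ⁅⁅a, b⁆, ⁅c, d⁆⁆ = 0 := by
  induction a using TensorProduct.induction_on with
  | zero => rw [tzero_lie, tzero_lie]
  | add a₁ a₂ ha₁ ha₂ => rw [tadd_lie, tadd_lie, ha₁, ha₂, add_zero]
  | tmul r x =>
    induction b using TensorProduct.induction_on with
    | zero => rw [tlie_zero, tzero_lie]
    | add b₁ b₂ h₁ h₂ => rw [tlie_add, tadd_lie, h₁, h₂, add_zero]
    | tmul s y =>
      induction c using TensorProduct.induction_on with
      | zero => rw [tzero_lie, tlie_zero]
      | add c₁ c₂ h₁ h₂ => rw [tadd_lie, tlie_add, h₁, h₂, add_zero]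
      | tmul t z =>
        induction d using TensorProduct.induction_on with
        | zero => rw [tlie_zero, tlie_zero]
        | add d₁ d₂ h₁ h₂ => rw [tlie_add, tlie_add, h₁, h₂, add_zero]
        | tmul u w =>
          rw [tmul_bracket' p, tmul_bracket' p, tmul_bracket' p, h2, TensorProduct.tmul_zero]
end

section
variable (p : ℕ) [hpf : Fact p.Prime] {L : Type*} [LieRing L] (φ : AddAut L)

lemma phi_pow_mod (hord : addOrderOf φ = p) (n : ℕ) : (n % p) • φ = n • φ := by
  rw [← hord]; exact mod_addOrderOf_nsmul φ n

lemma phi_pow_succ (hord : addOrderOf φ = p) (j : ZMod p) (x : L) :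
    ((j + 1).val • φ) x = φ ((j.val • φ) x) := by
  haveI : NeZero p := ⟨hpf.out.ne_zero⟩
  have h1 : (j + (1 : ZMod p)).val = (j.val + (1 : ZMod p).val) % p := ZMod.val_add j 1
  have h2 : ((1 : ZMod p)).val = 1 := by
    rw [ZMod.val_one_eq_one_mod]; exact Nat.mod_eq_of_lt hpf.out.one_lt
  rw [h1, h2, phi_pow_mod p φ hord, succ_nsmul']
  rfl

/-- The trace `x + φ x + … + φ^(p-1) x`, a fixed point of `φ`. -/
noncomputable def TrL (x : L) : L := ∑ j : ZMod p, (j.val • φ) x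

lemma TrL_fixed (hord : addOrderOf φ = p) (x : L) : φ (TrL p φ x) = TrL p φ x := by
  rw [TrL, map_sum]
  exact Fintype.sum_equiv (Equiv.addRight (1 : ZMod p)) (fun j => φ ((j.val • φ) x))
    (fun j => (j.val • φ) x)
    (fun j => by simp only [Equiv.coe_addRight]; exact (phi_pow_succ p φ hord j x).symm)

noncomputable def xi (k : ZMod p) (x : L) : Rp p ⊗[ℤ] L :=
  ∑ j : ZMod p, Om p (-(k * j)) • ((1 : Rp p) ⊗ₜ[ℤ] ((j.val • φ) x))

lemma xi_zero_eq (x : L) : xi p φ 0 x = (1 : Rp p) ⊗ₜ[ℤ] TrL p φ x := by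
  rw [xi, TrL, TensorProduct.tmul_sum]
  refine Finset.sum_congr rfl (fun j _ => ?_)
  rw [show -((0 : ZMod p) * j) = 0 by ring, Om_zero, one_smul]

lemma xi_zero_mem (hord : addOrderOf φ = p) (x : L) : xi p φ 0 x ∈ Itil p φ := by
  rw [xi_zero_eq]
  intro i
  rw [coordT_tmul]
  refine AddSubgroup.zsmul_mem _ ?_ _
  exact subset_idealGen _ (TrL_fixed p φ hord x)

lemma xi_eig (hord : addOrderOf φ = p) (k : ZMod p) (x : L) :
    Phi p φ (xi p φ k x) = Om p k • xi p φ k x := by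
  rw [xi, map_sum, Finset.smul_sum]
  refine Fintype.sum_equiv (Equiv.addRight (1 : ZMod p)) _ _ (fun j => ?_)
  simp only [Equiv.coe_addRight]
  rw [map_smul, Phi_tmul, ← phi_pow_succ p φ hord, smul_smul, ← Om_add]
  congr 2
  ring

lemma sum_xi (x : L) : ∑ k : ZMod p, xi p φ k x = (p : Rp p) • ((1 : Rp p) ⊗ₜ[ℤ] x) := by
  haveI : NeZero p := ⟨hpf.out.ne_zero⟩
  rw [show (∑ k : ZMod p, xi p φ k x)
      = ∑ k : ZMod p, ∑ j : ZMod p, Om p (-(k * j)) • ((1 : Rp p) ⊗ₜ[ℤ] ((j.val • φ) x))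
    from rfl, Finset.sum_comm]
  have key : ∀ j : ZMod p, ∑ k : ZMod p, Om p (-(k * j)) • ((1 : Rp p) ⊗ₜ[ℤ] ((j.val • φ) x))
      = (∑ k : ZMod p, Om p (k * (-j))) • ((1 : Rp p) ⊗ₜ[ℤ] ((j.val • φ) x)) := by
    intro j
    rw [Finset.sum_smul]
    refine Finset.sum_congr rfl (fun k _ => ?_)
    rw [show -(k * j) = k * (-j) by ring]
  rw [Finset.sum_congr rfl (fun j _ => key j)]
  rw [Finset.sum_eq_single_of_mem 0 (Finset.mem_univ 0) ?other]
  case other =>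
    intro j _ hj
    rw [Om_sum_mul p (neg_ne_zero.mpr hj), zero_smul]
  have e1 : ∀ k : ZMod p, Om p (k * -(0 : ZMod p)) = 1 := fun k => by
    rw [show k * -(0 : ZMod p) = 0 by ring, Om_zero]
  rw [Finset.sum_congr rfl (fun k _ => e1 k), Finset.sum_const, Finset.card_univ, ZMod.card,
    nsmul_eq_mul, mul_one]
  congr 1
  simp [ZMod.val_zero]
end

section
variable (p : ℕ) [hpf : Fact p.Prime] {L : Type*} [LieRing L] (φ : AddAut L)

lemma coordT_Phi (i : Fin (pB p).dim) (z : Rp p ⊗[ℤ] L) :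
    coordT p i (Phi p φ z) = φ (coordT p i z) := by
  induction z using TensorProduct.induction_on with
  | zero => rw [map_zero, map_zero, map_zero]
  | tmul r x =>
    rw [Phi_tmul, coordT_tmul, coordT_tmul]
    exact (map_zsmul φ.toAddMonoidHom _ _).symm
  | add z₁ z₂ h₁ h₂ => rw [map_add, map_add, h₁, h₂, map_add, map_add]

lemma fixed_mem_Itil {z : Rp p ⊗[ℤ] L} (hz : Phi p φ z = z) : z ∈ Itil p φ := by
  intro i
  have h : φ (coordT p i z) = coordT p i z := by rw [← coordT_Phi p φ i z, hz]
  exact subset_idealGen _ h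

lemma iot_mem_pullback {x : L} (h : (1 : Rp p) ⊗ₜ[ℤ] x ∈ Itil p φ) :
    x ∈ idealGen {y : L | φ y = y} := by
  have hx := h ⟨0, pB_dim_pos p⟩
  rw [coordT_tmul] at hx
  have hb : (pB p).basis ⟨0, pB_dim_pos p⟩ = 1 := by
    rw [PowerBasis.basis_eq_pow]
    exact pow_zero _
  rw [← hb, Module.Basis.repr_self, Finsupp.single_eq_same, one_smul] at hx
  exact hx
end

section
variable (p : ℕ) [hpf : Fact p.Prime] {L : Type*} [LieRing L] (φ : AddAut L)

noncomputable def bstep : (Rp p ⊗[ℤ] L) → (ZMod p × (Rp p ⊗[ℤ] L)) → (Rp p ⊗[ℤ] L) :=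
  fun a q => ⁅a, q.2⁆

noncomputable def brFold : List (ZMod p × (Rp p ⊗[ℤ] L)) → Rp p ⊗[ℤ] L
  | [] => 0
  | q :: t => t.foldl (bstep p) q.2

lemma swap_key (a x y : Rp p ⊗[ℤ] L) (hP : ∀ u v : Rp p ⊗[ℤ] L, ⁅a, ⁅u, v⁆⁆ = 0) :
    ⁅⁅a, x⁆, y⁆ = ⁅⁅a, y⁆, x⁆ := by
  have l1 := tleibniz p a x y
  rw [hP x y] at l1
  have l2 : ⁅⁅a, x⁆, y⁆ = -⁅x, ⁅a, y⁆⁆ := eq_neg_of_add_eq_zero_left l1.symm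
  rw [l2]
  exact lie_skew ⁅a, y⁆ x ▸ (lie_skew x ⁅a, y⁆).symm ▸ rfl

lemma foldl_perm (h2 : ∀ a b c d : L, ⁅⁅a, b⁆, ⁅c, d⁆⁆ = 0)
    {l₁ l₂ : List (ZMod p × (Rp p ⊗[ℤ] L))} (hperm : l₁.Perm l₂) :
    ∀ a : Rp p ⊗[ℤ] L, (∀ u v : Rp p ⊗[ℤ] L, ⁅a, ⁅u, v⁆⁆ = 0) →
      l₁.foldl (bstep p) a = l₂.foldl (bstep p) a := by
  induction hperm with
  | nil => intro a _; rfl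
  | cons q hperm ih =>
    intro a hP
    simp only [List.foldl_cons]
    exact ih ⁅a, q.2⁆ (fun u v => h2t p h2 a q.2 u v)
  | swap x y l =>
    intro a hP
    simp only [List.foldl_cons]
    rw [show bstep p (bstep p a y) x = bstep p (bstep p a x) y from swap_key p a y.2 x.2 hP]
  | trans h₁ h₂ ih₁ ih₂ =>
    intro a hP
    rw [ih₁ a hP, ih₂ a hP]

lemma foldl_Itil {z : Rp p ⊗[ℤ] L} (hz : z ∈ Itil p φ)
    (l : List (ZMod p × (Rp p ⊗[ℤ] L))) : l.foldl (bstep p) z ∈ Itil p φ := by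
  induction l generalizing z with
  | nil => exact hz
  | cons q t ih => exact ih (Itil_lie_right p φ hz q.2)

lemma foldl_eig (hlie : ∀ x y : L, φ ⁅x, y⁆ = ⁅φ x, φ y⁆)
    (l : List (ZMod p × (Rp p ⊗[ℤ] L))) :
    ∀ (a : Rp p ⊗[ℤ] L) (w : ZMod p), Phi p φ a = Om p w • a →
    (∀ q ∈ l, Phi p φ q.2 = Om p q.1 • q.2) →
    Phi p φ (l.foldl (bstep p) a) =
      Om p (w + (l.map Prod.fst).sum) • l.foldl (bstep p) a := by
  induction l with
  | nil => intro a w ha _; simpa using ha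
  | cons q t ih =>
    intro a w ha hl
    simp only [List.foldl_cons]
    have hstep : Phi p φ (bstep p a q) = Om p (w + q.1) • (bstep p a q) := by
      rw [show bstep p a q = ⁅a, q.2⁆ from rfl, Phi_lie p φ hlie, ha,
        hl q List.mem_cons_self, tsmul_lie, tlie_smul, smul_smul, ← Om_add]
    have := ih (bstep p a q) (w + q.1) hstep (fun q' hq' => hl q' (List.mem_cons_of_mem q hq'))
    rw [this]
    congr 1
    rw [List.map_cons, List.sum_cons, add_assoc]

lemma gen_mem_Itil (hlie : ∀ x y : L, φ ⁅x, y⁆ = ⁅φ x, φ y⁆) (hord : addOrderOf φ = p)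
    (h2 : ∀ a b c d : L, ⁅⁅a, b⁆, ⁅c, d⁆⁆ = 0)
    {l : List (ZMod p × (Rp p ⊗[ℤ] L))} (hlen : l.length = p + 1)
    (hall : ∀ q ∈ l, Phi p φ q.2 = Om p q.1 • q.2 ∧ q.1 ≠ 0) :
    brFold p l ∈ Itil p φ := by
  have hp2 : 2 ≤ p := hpf.out.two_le
  rcases l with _ | ⟨q0, _ | ⟨q1, t⟩⟩
  · simp at hlen
  · exfalso; simp at hlen; omega
  have htlen : t.length = p - 1 := by simp at hlen; omega
  have h0 : ∀ x ∈ t.map Prod.fst, x ≠ 0 := by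
    intro x hx
    obtain ⟨q, hq, rfl⟩ := List.mem_map.mp hx
    exact (hall q (by simp [hq])).2
  have hlen2 : p ≤ (t.map Prod.fst).length + 1 := by rw [List.length_map, htlen]; omega
  obtain ⟨s, hs, hsum⟩ := exists_sublist_sum (t.map Prod.fst) h0 hlen2 (-(q0.1 + q1.1))
  obtain ⟨s', hs', rfl⟩ := List.sublist_map_iff.mp hs
  obtain ⟨rest, hrest⟩ := hs'.exists_perm_append
  set a : Rp p ⊗[ℤ] L := ⁅q0.2, q1.2⁆ with ha_def
  have ha : Phi p φ a = Om p (q0.1 + q1.1) • a := by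
    rw [ha_def, Phi_lie p φ hlie, (hall q0 (by simp)).1, (hall q1 (by simp)).1,
      tsmul_lie, tlie_smul, smul_smul, ← Om_add]
  have hP : ∀ u v : Rp p ⊗[ℤ] L, ⁅a, ⁅u, v⁆⁆ = 0 := fun u v => h2t p h2 q0.2 q1.2 u v
  have heq1 : brFold p (q0 :: q1 :: t) = t.foldl (bstep p) a := rfl
  have heq2 : t.foldl (bstep p) a = rest.foldl (bstep p) (s'.foldl (bstep p) a) := by
    rw [foldl_perm p h2 hrest a hP, List.foldl_append]
  have hc : s'.foldl (bstep p) a ∈ Itil p φ := by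
    apply fixed_mem_Itil
    have := foldl_eig p φ hlie s' a (q0.1 + q1.1) ha
      (fun q hq => (hall q (by simp [hs'.subset hq])).1)
    rw [this, hsum, add_neg_cancel, Om_zero, one_smul]
  rw [heq1, heq2]
  exact foldl_Itil p φ hc rest
end

section
variable (p : ℕ) [hpf : Fact p.Prime] {L : Type*} [LieRing L] (φ : AddAut L)

def GenSet (n : ℕ) : Set (Rp p ⊗[ℤ] L) :=
  {z | ∃ l : List (ZMod p × (Rp p ⊗[ℤ] L)), l.length = n + 1 ∧
    (∀ q ∈ l, Phi p φ q.2 = Om p q.1 • q.2 ∧ q.1 ≠ 0) ∧ z = brFold p l}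

noncomputable def EE (n : ℕ) : AddSubgroup (Rp p ⊗[ℤ] L) :=
  AddSubgroup.closure ((Itil p φ : Set (Rp p ⊗[ℤ] L)) ∪ GenSet p φ n)

lemma E1 (hord : addOrderOf φ = p) (x : L) :
    (p : Rp p) • ((1 : Rp p) ⊗ₜ[ℤ] x) ∈ EE p φ 0 := by
  rw [← sum_xi p φ x, ← Finset.add_sum_erase _ _ (Finset.mem_univ (0 : ZMod p))]
  refine add_mem (AddSubgroup.subset_closure (Or.inl (xi_zero_mem p φ hord x)))
    (AddSubgroup.sum_mem _ (fun k hk => ?_))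
  refine AddSubgroup.subset_closure (Or.inr ⟨[(k, xi p φ k x)], rfl, ?_, rfl⟩)
  intro q hq
  rw [List.mem_singleton] at hq
  subst hq
  exact ⟨xi_eig p φ hord k x, (Finset.mem_erase.mp hk).1⟩

lemma E2 {n : ℕ} {z w : Rp p ⊗[ℤ] L} (hz : z ∈ EE p φ n) (hw : w ∈ EE p φ 0) :
    ⁅z, w⁆ ∈ EE p φ (n + 1) := by
  induction hz using AddSubgroup.closure_induction with
  | zero => rw [tzero_lie]; exact zero_mem _
  | add z₁ z₂ hz₁ hz₂ h₁ h₂ => rw [tadd_lie]; exact add_mem h₁ h₂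
  | neg z₁ hz₁ h₁ => rw [tneg_lie]; exact neg_mem h₁
  | mem z hzm =>
    rcases hzm with hzI | hzG
    · exact AddSubgroup.subset_closure (Or.inl (Itil_lie_right p φ hzI w))
    · induction hw using AddSubgroup.closure_induction with
      | zero => rw [tlie_zero]; exact zero_mem _
      | add w₁ w₂ hw₁ hw₂ h₁ h₂ => rw [tlie_add]; exact add_mem h₁ h₂
      | neg w₁ hw₁ h₁ => rw [tlie_neg]; exact neg_mem h₁
      | mem w hwm =>
        rcases hwm with hwI | hwG
        · exact AddSubgroup.subset_closure (Or.inl (Itil_lie_left p φ hwI z))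
        · obtain ⟨l, hlen, hall, rfl⟩ := hzG
          obtain ⟨l', hlen', hall', rfl⟩ := hwG
          have hone : l'.length = 1 := by simpa using hlen'
          obtain ⟨q, rfl⟩ := List.length_eq_one_iff.mp hone
          rcases l with _ | ⟨q0, t⟩
          · simp at hlen
          refine AddSubgroup.subset_closure (Or.inr ⟨(q0 :: t) ++ [q], ?_, ?_, ?_⟩)
          · simp only [List.length_append, List.length_cons, List.length_singleton,
              List.length_nil] at hlen ⊢
            omega
          · intro q'' hq''
            rcases List.mem_append.mp hq'' with h | h
            · exact hall q'' h
            · rw [List.mem_singleton] at h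
              exact h ▸ hall' _ (List.mem_singleton_self _)
          · show ⁅brFold p (q0 :: t), brFold p [q]⁆ = brFold p ((q0 :: t) ++ [q])
            rw [show brFold p [q] = q.2 from rfl,
              show brFold p ((q0 :: t) ++ [q]) = ((t ++ [q]).foldl (bstep p) q0.2) from rfl,
              List.foldl_append]
            rfl
end

section
variable (p : ℕ) [hpf : Fact p.Prime] {L : Type*} [LieRing L] (φ : AddAut L)

lemma base_mem (hord : addOrderOf φ = p) {z : L} (hz : z ∈ smulImg p (⊤ : AddSubgroup L)) :
    (1 : Rp p) ⊗ₜ[ℤ] z ∈ EE p φ 0 := by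
  obtain ⟨x, -, rfl⟩ := AddSubgroup.mem_map.mp hz
  have e : (1 : Rp p) ⊗ₜ[ℤ] ((p • AddMonoidHom.id L) x) = (p : Rp p) • ((1 : Rp p) ⊗ₜ[ℤ] x) := by
    rw [AddMonoidHom.smul_apply, AddMonoidHom.id_apply, Nat.cast_smul_eq_nsmul (Rp p),
      TensorProduct.tmul_smul]
  rw [e]
  exact E1 p φ hord x

lemma iter_mem (hord : addOrderOf φ = p) :
    ∀ n, ∀ z ∈ iterBr (smulImg p (⊤ : AddSubgroup L)) (smulImg p (⊤ : AddSubgroup L)) n,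
      (1 : Rp p) ⊗ₜ[ℤ] z ∈ EE p φ n := by
  intro n
  induction n with
  | zero => exact fun z hz => base_mem p φ hord hz
  | succ n ih =>
    intro z hz
    induction hz using AddSubgroup.closure_induction with
    | mem z hzm =>
      obtain ⟨c, hc, d, hd, rfl⟩ := hzm
      have e : (1 : Rp p) ⊗ₜ[ℤ] ⁅c, d⁆ = ⁅(1 : Rp p) ⊗ₜ[ℤ] c, (1 : Rp p) ⊗ₜ[ℤ] d⁆ := by
        rw [tmul_bracket' p, one_mul]
      rw [e]
      exact E2 p φ (ih c hc) (base_mem p φ hord hd)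
    | zero => rw [TensorProduct.tmul_zero]; exact zero_mem _
    | add a b _ _ ha hb => rw [TensorProduct.tmul_add]; exact add_mem ha hb
    | neg a _ ha => rw [TensorProduct.tmul_neg]; exact neg_mem ha

lemma EE_p_le_Itil (hlie : ∀ x y : L, φ ⁅x, y⁆ = ⁅φ x, φ y⁆) (hord : addOrderOf φ = p)
    (h2 : ∀ a b c d : L, ⁅⁅a, b⁆, ⁅c, d⁆⁆ = 0) :
    EE p φ p ≤ Itil p φ := by
  rw [EE]
  refine (AddSubgroup.closure_le _).mpr ?_
  rintro z (hzI | hzG)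
  · exact hzI
  · obtain ⟨l, hlen, hall, rfl⟩ := hzG
    exact gen_mem_Itil p φ hlie hord h2 hlen hall

end

/-- Let `L` be a finite Lie ring of derived length at most 2 admitting an
automorphism `φ` of order `p`.  Then `γ_{p+1}(pL)` is contained in the ideal of `L`
generated by the fixed-point subring `C_L(φ)`. -/
theorem stmt6 (p : ℕ) (hp : p.Prime) (L : Type*) [LieRing L] [Finite L]
    (h2 : ∀ a b c d : L, ⁅⁅a, b⁆, ⁅c, d⁆⁆ = 0)
    (φ : AddAut L) (hlie : ∀ x y : L, φ ⁅x, y⁆ = ⁅φ x, φ y⁆)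
    (hord : addOrderOf φ = p) :
    iterBr (smulImg p (⊤ : AddSubgroup L)) (smulImg p (⊤ : AddSubgroup L)) p ≤
      idealGen {x : L | φ x = x} := by
  haveI : Fact p.Prime := ⟨hp⟩
  intro z hz
  exact iot_mem_pullback p φ (EE_p_le_Itil p φ hlie hord h2 (iter_mem p φ hord p z hz))
end

section
/- Let P be a finite p-group admitting an automorphism φ of order p^n with exactly p^m fixed points, and suppose P^{p^f} = 1 for some f (i.e., P has exponent dividing p^f). Then P can be generated by at most m·p^n elements. -/
/-!
The Frattini quotient `V = P ⧸ Φ(P)` of a finite `p`-group is elementary abelian, hence an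
`𝔽_p`-vector space, and lifts of a basis of `V` generate `P` because `Φ(P)` consists of
non-generators. The automorphism `φ` induces a linear map `g` on `V` with `g ^ p ^ n = 1` and at
most `p ^ m` fixed vectors: a quotient by a `φ`-invariant normal subgroup has no more fixed points
than the group itself. In characteristic `p`, `(g - 1) ^ p ^ n = g ^ p ^ n - 1 = 0`, and since
`dim ker δ^(j+1) ≤ dim ker δ^j + dim ker δ`, a nilpotent `δ` with `δ ^ q = 0` satisfies
`dim V ≤ q * dim ker δ`. With `δ = g - 1`, whose kernel has dimension at most `m`, this gives
`dim V ≤ m * p ^ n`.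
-/

open Module LinearMap
open scoped commutatorElement

section LinearAlgebra

variable {K V : Type*} [DivisionRing K] [AddCommGroup V] [Module K V] [FiniteDimensional K V]

theorem LinearMap.finrank_comap_le {V' : Type*} [AddCommGroup V'] [Module K V']
    [FiniteDimensional K V'] (f : V →ₗ[K] V') (W : Submodule K V') :
    finrank K (W.comap f) ≤ finrank K W + finrank K (ker f) := by
  have h := f.lift_rank_comap_le W
  simp only [← Submodule.finrank_eq_rank, Cardinal.lift_natCast] at h
  exact_mod_cast h

theorem Module.End.finrank_ker_pow_le (δ : Module.End K V) (j : ℕ) :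
    finrank K (ker (δ ^ j)) ≤ finrank K (ker δ) * j := by
  induction j with
  | zero => simp [Module.End.one_eq_id]
  | succ j ih =>
    rw [pow_succ, Module.End.mul_eq_comp, ker_comp, Nat.mul_succ]
    exact (finrank_comap_le δ _).trans (by omega)

theorem Module.End.finrank_le_of_pow_eq_zero (δ : Module.End K V) {q : ℕ} (hq : δ ^ q = 0) :
    finrank K V ≤ finrank K (ker δ) * q := by
  have h := δ.finrank_ker_pow_le q
  rwa [hq, ker_zero, finrank_top] at h

end LinearAlgebra

theorem Module.End.finrank_le_of_card_fixedPoints_le {p : ℕ} [Fact p.Prime] {V : Type*}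
    [AddCommGroup V] [Module (ZMod p) V] [Finite V] (g : Module.End (ZMod p) V) {n m : ℕ}
    (hg : g ^ p ^ n = 1) (hfix : Nat.card {v // g v = v} ≤ p ^ m) :
    finrank (ZMod p) V ≤ m * p ^ n := by
  rcases subsingleton_or_nontrivial V with hV | hV
  · simp [finrank_zero_of_subsingleton]
  have : CharP (Module.End (ZMod p) V) p := charP_of_injective_algebraMap' (ZMod p) p
  have hnil : (g - 1) ^ p ^ n = 0 := by
    rw [sub_pow_char_pow_of_commute _ _ (Commute.one_right g), hg, one_pow, sub_self]
  have hker : finrank (ZMod p) (ker (g - 1)) ≤ m := by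
    have hcard : Nat.card (ker (g - 1)) = Nat.card {v // g v = v} :=
      Nat.card_congr (Equiv.subtypeEquivRight fun v => by simp [sub_eq_zero])
    rw [natCard_eq_pow_finrank (K := ZMod p), Nat.card_zmod] at hcard
    exact (Nat.pow_le_pow_iff_right (Fact.out : p.Prime).one_lt).mp (hcard ▸ hfix)
  calc finrank (ZMod p) V ≤ finrank (ZMod p) (ker (g - 1)) * p ^ n :=
        (g - 1).finrank_le_of_pow_eq_zero hnil
    _ ≤ m * p ^ n := Nat.mul_le_mul_right _ hker

theorem MulAut.coe_pow {G : Type*} [Group G] (ψ : MulAut G) (k : ℕ) : ⇑(ψ ^ k) = (⇑ψ)^[k] :=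
  hom_coe_pow _ rfl (fun _ _ => rfl) ψ k

theorem MulAut.pow_eq_one_of_semiconj {G H : Type*} [Group G] [Group H] {π : G → H}
    (hπ : Function.Surjective π) {φ : MulAut G} {ψ : MulAut H} (h : Function.Semiconj π φ ψ)
    {k : ℕ} (hk : φ ^ k = 1) : ψ ^ k = 1 := by
  ext y
  obtain ⟨x, rfl⟩ := hπ y
  rw [MulAut.coe_pow, ← (h.iterate_right k).eq, ← MulAut.coe_pow, hk, MulAut.one_apply,
    MulAut.one_apply]

theorem Group.rank_le_of_card_fixedPoints_le {p : ℕ} [Fact p.Prime] {A : Type*} [Group A]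
    [Finite A] (hcomm : ∀ a b : A, a * b = b * a) (hexp : ∀ a : A, a ^ p = 1) (ψ : MulAut A)
    {n m : ℕ} (hψ : ψ ^ p ^ n = 1) (hfix : Nat.card {a // ψ a = a} ≤ p ^ m) :
    Group.rank A ≤ m * p ^ n := by
  classical
  let _ : CommGroup A := { ‹Group A› with mul_comm := hcomm }
  let _ : Module (ZMod p) (Additive A) := AddCommGroup.zmodModule (n := p) fun a => hexp a.toMul
  let g : Module.End (ZMod p) (Additive A) :=
    (MulEquiv.toAdditive ψ).toAddMonoidHom.toZModLinearMap p
  have hg : g ^ p ^ n = 1 := by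
    refine LinearMap.ext fun v => ?_
    have h : Function.Semiconj Additive.ofMul ψ g := fun _ => rfl
    rw [Module.End.coe_pow, Module.End.one_apply, ← ofMul_toMul v, ← (h.iterate_right _).eq,
      ← MulAut.coe_pow, hψ, MulAut.one_apply]
  have hdim := g.finrank_le_of_card_fixedPoints_le hg hfix
  let b := Module.finBasis (ZMod p) (Additive A)
  refine (Group.rank_le (S := Finset.univ.image fun i => (b i).toMul) ?_).trans ?_
  · rw [eq_top_iff]
    intro a _
    have hspan : Submodule.span (ZMod p) (Set.range b) ≤ AddSubgroup.toZModSubmodule p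
        (Subgroup.toAddSubgroup (Subgroup.closure ↑(Finset.univ.image fun i => (b i).toMul))) :=
      Submodule.span_le.mpr <| by
        rintro _ ⟨i, rfl⟩
        show (b i).toMul ∈ Subgroup.closure _
        exact Subgroup.subset_closure (Finset.mem_image_of_mem _ (Finset.mem_univ i))
    rw [b.span_eq] at hspan
    exact hspan (Submodule.mem_top (x := Additive.ofMul a))
  · exact Finset.card_image_le.trans (by simpa using hdim)

theorem QuotientGroup.card_fixedPoints_le {G : Type*} [Group G] [Finite G] (N : Subgroup G)
    [N.Normal] (φ : MulAut G) (ψ : MulAut (G ⧸ N)) (hψ : ∀ x : G, ψ x = φ x) :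
    Nat.card {y // ψ y = y} ≤ Nat.card {x // φ x = x} := by
  let T := (QuotientGroup.mk : G → G ⧸ N) ⁻¹' {y | ψ y = y}
  have hT : ∀ x : T, (x : G)⁻¹ * φ x ∈ N := fun x =>
    QuotientGroup.eq.mp ((hψ x).symm.trans x.2).symm
  let τ : T → N := fun x => ⟨(x : G)⁻¹ * φ x, hT x⟩
  have : Nonempty T := ⟨⟨1, by simp [T]⟩⟩
  let σ := Function.invFun τ
  have hσ (x : T) : τ (σ (τ x)) = τ x := Function.invFun_eq ⟨x, rfl⟩
  -- `x⁻¹ φ(x)` determines `x` up to left multiplication by a fixed point of `φ`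
  let ι : T → N × {x // φ x = x} := fun x =>
    (τ x, ⟨x * (σ (τ x) : G)⁻¹, by
      have h : (σ (τ x) : G)⁻¹ * φ (σ (τ x)) = (x : G)⁻¹ * φ x := congrArg Subtype.val (hσ x)
      rw [map_mul, map_inv, mul_inv_eq_iff_eq_mul, mul_assoc, h, mul_inv_cancel_left]⟩)
  have hι : Function.Injective ι := by
    intro x y hxy
    simp only [ι, Prod.mk.injEq, Subtype.mk.injEq] at hxy
    obtain ⟨h1, h2⟩ := hxy
    rw [h1] at h2
    exact Subtype.ext (mul_right_cancel h2)
  have hcard := Nat.card_le_card_of_injective ι hι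
  rw [Nat.card_congr (QuotientGroup.preimageMkEquivSubgroupProdSet N _), Nat.card_prod,
    Nat.card_prod] at hcard
  exact Nat.le_of_mul_le_mul_left hcard Nat.card_pos

namespace IsPGroup

variable {p : ℕ} [hp : Fact p.Prime] {G : Type*} [Group G] [Finite G]

theorem index_eq_of_isCoatom (hG : IsPGroup p G) {M : Subgroup G} (hM : IsCoatom M) :
    M.index = p := by
  obtain ⟨k, hk⟩ := iff_card.mp (hG.to_subgroup M)
  obtain ⟨j, hj⟩ := hG.index M
  have hj0 : j ≠ 0 := by
    rintro rfl
    exact hM.1 (Subgroup.index_eq_one.mp (by simpa using hj))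
  have hG_card : Nat.card G = p ^ (j + k) := by rw [← M.index_mul_card, hj, hk, pow_add]
  obtain ⟨K, hK, hMK⟩ := Sylow.exists_subgroup_card_pow_succ
    (hG_card ▸ pow_dvd_pow p (by omega)) hk
  have hMK' : M ≠ K := by
    rintro rfl
    exact (Nat.pow_right_injective hp.out.two_le).ne (show k ≠ k + 1 by omega) (hk.symm.trans hK)
  have hK_top : K = ⊤ := hM.2 K (hMK.lt_of_ne hMK')
  have : j + k = k + 1 := Nat.pow_right_injective hp.out.two_le <|
    show p ^ (j + k) = p ^ (k + 1) by rw [← hG_card, ← hK, hK_top, Subgroup.card_top]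
  rw [hj, show j = 1 by omega, pow_one]

theorem normal_of_isCoatom (hG : IsPGroup p G) {M : Subgroup G} (hM : IsCoatom M) : M.Normal :=
  have := hG.isNilpotent
  Subgroup.NormalizerCondition.normal_of_coatom M Group.normalizerCondition_of_isNilpotent hM

theorem pow_mem_of_isCoatom (hG : IsPGroup p G) {M : Subgroup G} (hM : IsCoatom M) (x : G) :
    x ^ p ∈ M :=
  have := hG.normal_of_isCoatom hM
  hG.index_eq_of_isCoatom hM ▸ M.pow_index_mem x

theorem commutatorElement_mem_of_isCoatom (hG : IsPGroup p G) {M : Subgroup G} (hM : IsCoatom M)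
    (x y : G) : ⁅x, y⁆ ∈ M := by
  have := hG.normal_of_isCoatom hM
  have : IsCyclic (G ⧸ M) := isCyclic_of_prime_card (p := p) <| by
    rw [← Subgroup.index_eq_card, hG.index_eq_of_isCoatom hM]
  rw [← QuotientGroup.eq_one_iff, ← QuotientGroup.mk'_apply, map_commutatorElement,
    commutatorElement_eq_one_iff_mul_comm]
  exact Std.Commutative.comm _ _

theorem pow_mem_frattini (hG : IsPGroup p G) (x : G) : x ^ p ∈ frattini G :=
  Subgroup.mem_iInf.mpr fun _ => Subgroup.mem_iInf.mpr fun hM => hG.pow_mem_of_isCoatom hM x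

theorem commutatorElement_mem_frattini (hG : IsPGroup p G) (x y : G) : ⁅x, y⁆ ∈ frattini G :=
  Subgroup.mem_iInf.mpr fun _ => Subgroup.mem_iInf.mpr fun hM =>
    hG.commutatorElement_mem_of_isCoatom hM x y

theorem mul_comm_quotient_frattini (hG : IsPGroup p G) (a b : G ⧸ frattini G) :
    a * b = b * a := by
  induction a using QuotientGroup.induction_on with | H x =>
  induction b using QuotientGroup.induction_on with | H y =>
  rw [← commutatorElement_eq_one_iff_mul_comm, ← QuotientGroup.mk'_apply, ← QuotientGroup.mk'_apply,
    ← map_commutatorElement, QuotientGroup.mk'_apply, QuotientGroup.eq_one_iff]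
  exact hG.commutatorElement_mem_frattini x y

theorem pow_eq_one_quotient_frattini (hG : IsPGroup p G) (a : G ⧸ frattini G) : a ^ p = 1 := by
  induction a using QuotientGroup.induction_on with | H x =>
  rw [← QuotientGroup.mk_pow, QuotientGroup.eq_one_iff]
  exact hG.pow_mem_frattini x

end IsPGroup

theorem Group.rank_le_rank_quotient_frattini {G : Type*} [Group G] [Group.FG G]
    [IsCoatomic (Subgroup G)] :
    Group.rank G ≤ Group.rank (G ⧸ frattini G) := by
  classical
  obtain ⟨S, hS, hclosure⟩ := Group.rank_spec (G ⧸ frattini G)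
  let T := S.image Quotient.out
  have hT : (QuotientGroup.mk' (frattini G)) '' T = S := by
    simp [T, Set.image_image]
  refine (Group.rank_le (S := T) ?_).trans (hS ▸ Finset.card_image_le)
  apply frattini_nongenerating
  rw [← QuotientGroup.ker_mk' (frattini G), ← Subgroup.comap_map_eq, MonoidHom.map_closure, hT,
    hclosure, Subgroup.comap_top]

theorem stmt19_general (p n m : ℕ) (hp : p.Prime)
    (P : Type*) [Group P] [Finite P] (hcard : ∃ e : ℕ, Nat.card P = p ^ e)
    (φ : MulAut P) (hord : orderOf φ = p ^ n)
    (hfix : Nat.card {x : P // φ x = x} = p ^ m) :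
    ∃ S : Finset P, S.card ≤ m * p ^ n ∧ Subgroup.closure (S : Set P) = ⊤ := by
  have : Fact p.Prime := ⟨hp⟩
  have hP : IsPGroup p P := let ⟨_, he⟩ := hcard; .of_card he
  let φΦ : MulAut (P ⧸ frattini P) :=
    QuotientGroup.congr _ _ φ (Subgroup.characteristic_iff_map_eq.mp inferInstance φ)
  have hφΦ : φΦ ^ p ^ n = 1 := MulAut.pow_eq_one_of_semiconj (QuotientGroup.mk'_surjective _)
    (fun _ => rfl) (hord ▸ pow_orderOf_eq_one φ)
  obtain ⟨S, hS, hclosure⟩ := Group.rank_spec P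
  refine ⟨S, ?_, hclosure⟩
  calc S.card = Group.rank P := hS
    _ ≤ Group.rank (P ⧸ frattini P) := Group.rank_le_rank_quotient_frattini
    _ ≤ m * p ^ n := Group.rank_le_of_card_fixedPoints_le hP.mul_comm_quotient_frattini
          hP.pow_eq_one_quotient_frattini φΦ hφΦ
          ((QuotientGroup.card_fixedPoints_le _ φ φΦ fun _ => rfl).trans hfix.le)

/-- Let `P` be a finite `p`-group admitting an automorphism `φ` of order
`p^n` with exactly `p^m` fixed points, and suppose `P` has exponent dividing `p^f`.  Then
`P` can be generated by at most `m * p^n` elements. -/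
theorem stmt19 (p n m f : ℕ) (hp : p.Prime)
    (P : Type*) [Group P] [Finite P] (hcard : ∃ e : ℕ, Nat.card P = p ^ e)
    (φ : MulAut P) (hord : orderOf φ = p ^ n)
    (hfix : Nat.card {x : P // φ x = x} = p ^ m)
    (hexp : ∀ x : P, x ^ (p ^ f) = 1) :
    ∃ S : Finset P, S.card ≤ m * p ^ n ∧ Subgroup.closure (S : Set P) = ⊤ :=
  stmt19_general p n m hp P hcard φ hord hfix
end
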